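/- arXiv:1503.06997 — 8 statements merged into one kernel-verified Lean document; each statement's English description precedes it below -/
import Mathlib

section
/- Let A be an m×n complex matrix and λ ∈ ℝ. Then for all i ∈ {1,…,n} and j ∈ {1,…,m}, det((λI_n + A*A)_{.i}(a*_{.j})) = c₁^{(ij)} λ^{n−1} + c₂^{(ij)} λ^{n−2} + … + c_n^{(ij)}, where c_s^{(ij)} = Σ_{β ∈ J_{s,n}{i}} |(((A*A)_{.i}(a*_{.j}))_β^β| for s = 1,…,n−1 and c_n^{(ij)} = det((A*A)_{.i}(a*_{.j})). -/
/-!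
The matrix `(λI + AᴴA)_{.i}(aᴴ_{.j})` is `M + diag(d)` with `M = (AᴴA)_{.i}(aᴴ_{.j})` and
`d = (λ, …, λ, 0, λ, …, λ)`, the `0` in position `i`. Expanding the determinant multilinearly in the
rows gives `det (M + diag d) = ∑_S (∏_{k ∉ S} d k) |M_S^S|`; the summands with `i ∉ S` vanish and
the others contribute `λ^{n - |S|} |M_S^S|`, which are then grouped by `|S|`.
-/

open Matrix

/-- The principal minor of a square matrix `M` determined by the subset `β` of indices:
the determinant of the submatrix of `M` whose rows and columns are indexed by `β`. -/
noncomputable def Matrix.pminor {n : Type*} [DecidableEq n] [Fintype n]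
    (M : Matrix n n ℂ) (β : Finset n) : ℂ :=
  (M.submatrix (fun i : {x // x ∈ β} => i.1) (fun i : {x // x ∈ β} => i.1)).det

namespace Matrix

variable {n R : Type*} [DecidableEq n] [CommRing R]

theorem det_add_diagonal [Fintype n] (M : Matrix n n R) (d : n → R) :
    (M + diagonal d).det =
      ∑ s : Finset n, (∏ k ∈ sᶜ, d k) * (M.submatrix ((↑) : s → n) (↑)).det := by
  let P (s : Finset n) : n → n → R := s.piecewise M.row (1 : Matrix n n R).row
  have hrows : M + diagonal d = M.row + fun k => d k • (1 : Matrix n n R).row k := by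
    ext k l
    simp [diagonal_apply, one_apply]
  have hpiece (s : Finset n) :
      s.piecewise M.row (fun k => d k • (1 : Matrix n n R).row k) =
        sᶜ.piecewise (fun k => d k • P s k) (P s) := by
    ext k : 1
    by_cases hk : k ∈ s <;> simp [P, hk]
  change detRowAlternating (M + diagonal d) = _
  rw [hrows, ← AlternatingMap.coe_multilinearMap, MultilinearMap.map_add_univ]
  refine Finset.sum_congr rfl fun s _ => ?_
  rw [hpiece, MultilinearMap.map_piecewise_smul, smul_eq_mul, AlternatingMap.coe_multilinearMap]
  exact congrArg _ (det_piecewise_one_eq_submatrix_det M s)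

theorem updateCol_smul_one_add_eq_add_diagonal (t : R) (B : Matrix n n R) (i : n) (c : n → R) :
    (t • (1 : Matrix n n R) + B).updateCol i c =
      B.updateCol i c + diagonal (Function.update (fun _ => t) i 0) := by
  ext k l
  by_cases hl : l = i
  · subst hl
    by_cases hk : k = l <;> simp [hk]
  · by_cases hk : k = l <;> simp [hl, hk, add_comm]

end Matrix

namespace Finset

variable {ι : Type*} [Fintype ι] [DecidableEq ι]

theorem prod_compl_update_zero_const {M : Type*} [CommMonoidWithZero M] (s : Finset ι) (i : ι)
    (t : M) :
    ∏ k ∈ sᶜ, Function.update (fun _ => t) i 0 k =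
      if i ∈ s then t ^ (Fintype.card ι - #s) else 0 := by
  split_ifs with hi
  · have hne (k : ι) (hk : k ∈ sᶜ) : k ≠ i := fun h => mem_compl.1 hk (h ▸ hi)
    rw [prod_congr rfl fun k hk => Function.update_of_ne (hne k hk) _ _, prod_const, card_compl]
  · exact prod_eq_zero (mem_compl.2 hi) (by simp)

theorem sum_filter_mem_eq_sum_Icc_sum_powersetCard {M : Type*} [AddCommMonoid M] (i : ι)
    (f : Finset ι → M) :
    ∑ s with i ∈ s, f s =
      ∑ k ∈ Icc 1 (Fintype.card ι), ∑ s ∈ powersetCard k univ with i ∈ s, f s := by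
  rw [← sum_fiberwise_of_maps_to (g := card) (t := Icc 1 (Fintype.card ι))]
  · refine sum_congr rfl fun k _ => sum_congr ?_ fun _ _ => rfl
    ext s
    simp [and_comm]
  · intro s hs
    exact mem_Icc.2 ⟨card_pos.2 ⟨i, (mem_filter.1 hs).2⟩, card_le_univ s⟩

end Finset

/-- For an `m × n` complex matrix `A` and `λ ∈ ℝ`, for all `i, j`,
`det((λI_n + AᴴA)_{.i}(aᴴ_{.j})) = c₁ λ^{n-1} + ⋯ + c_n`, where
`c_s = Σ_{β ∈ J_{s,n}{i}} |((AᴴA)_{.i}(aᴴ_{.j}))_β^β|` (for `s = n` this sum is the single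
principal minor over all indices, i.e. `det((AᴴA)_{.i}(aᴴ_{.j}))`). -/
theorem det_smul_one_add_conjTranspose_mul_updateColumn
    (m n : ℕ) (A : Matrix (Fin m) (Fin n) ℂ) (lam : ℝ) (i : Fin n) (j : Fin m) :
    (((lam : ℂ) • (1 : Matrix (Fin n) (Fin n) ℂ) + Aᴴ * A).updateCol i
        (fun k => Aᴴ k j)).det =
      ∑ s ∈ Finset.Icc 1 n,
        (∑ β ∈ (Finset.powersetCard s (Finset.univ : Finset (Fin n))).filter
            (fun β => i ∈ β),
          ((Aᴴ * A).updateCol i (fun k => Aᴴ k j)).pminor β) * (lam : ℂ) ^ (n - s) := by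
  rw [updateCol_smul_one_add_eq_add_diagonal, det_add_diagonal]
  simp_rw [Finset.prod_compl_update_zero_const, ite_mul, zero_mul, ← Finset.sum_filter,
    Finset.sum_filter_mem_eq_sum_Icc_sum_powersetCard, Fintype.card_fin, Finset.sum_mul]
  refine Finset.sum_congr rfl fun s _ => Finset.sum_congr rfl fun β hβ => ?_
  rw [Finset.mem_powersetCard_univ.1 (Finset.mem_filter.1 hβ).1, mul_comm]
  rfl
end

section
/- Let A be an m×n complex matrix and λ ∈ ℝ. Then for all i ∈ {1,…,m} and j ∈ {1,…,n}, det((λI_m + AA*)_{j.}(a*_{i.})) = r₁^{(ij)} λ^{m−1} + r₂^{(ij)} λ^{m−2} + … + r_m^{(ij)}, where r_s^{(ij)} = Σ_{α ∈ I_{s,m}{j}} |(((AA*)_{j.}(a*_{i.}))_α^α| for s = 1,…,m−1 and r_m^{(ij)} = det((AA*)_{j.}(a*_{i.})). -/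
/-!
Write `(λI + AA*)_{j.}(a*_{i.})` as `diag d + V`, where `V = (AA*)_{j.}(a*_{i.})` and `d` is `λ`
on every index except `j`, where it is `0`. Expanding the determinant multilinearly in the rows,
the choice of the rows `α` taken from `V` contributes `∏_{k ∉ α} d k` times the principal minor
of `V` on `α`; this product vanishes unless `j ∈ α`, and is then `λ^(m - |α|)`. Grouping the
subsets `α` by their size gives the coefficients `r_s`.
-/

open Matrix

open Finset

namespace Matrix

theorem updateRow_diagonal_add {n α : Type*} [DecidableEq n] [AddZeroClass α] (d : n → α)
    (M : Matrix n n α) (j : n) (r : n → α) :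
    (diagonal d + M).updateRow j r = diagonal (Function.update d j 0) + M.updateRow j r := by
  ext k l
  by_cases hk : k = j
  · subst hk; simp [diagonal]
  · simp [hk, updateRow_ne, diagonal_apply]

variable {n R : Type*} [Fintype n] [DecidableEq n] [CommRing R]

theorem det_diagonal_add (d : n → R) (M : Matrix n n R) :
    (diagonal d + M).det =
      ∑ s : Finset n, (∏ k ∈ sᶜ, d k) * (M.submatrix (↑) (↑) : Matrix s s R).det := by
  rw [add_comm]
  change detRowAlternating (M.row + (diagonal d).row) = _
  rw [AlternatingMap.map_add_univ]
  refine sum_congr rfl fun s _ => ?_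
  have hrows : s.piecewise M.row (diagonal d).row =
      fun k => (if k ∈ s then 1 else d k) • s.piecewise M.row (1 : Matrix n n R).row k := by
    ext k l
    by_cases hk : k ∈ s <;> simp [hk, diagonal, one_apply]
  rw [hrows, AlternatingMap.map_smul_univ, smul_eq_mul, ← det_piecewise_one_eq_submatrix_det]
  congr 1
  simp [prod_ite, compl_eq_univ_sdiff, filter_notMem_eq_sdiff]

theorem det_updateRow_smul_one_add (c : R) (M : Matrix n n R) (j : n) (r : n → R) :
    ((c • 1 + M).updateRow j r).det =
      ∑ s : Finset n with j ∈ s,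
        ((M.updateRow j r).submatrix (↑) (↑) : Matrix s s R).det * c ^ (Fintype.card n - #s) := by
  rw [smul_one_eq_diagonal, updateRow_diagonal_add, det_diagonal_add, sum_filter]
  refine sum_congr rfl fun s _ => ?_
  by_cases hj : j ∈ s
  · rw [prod_update_of_notMem (by simpa using hj), prod_const, card_compl, if_pos hj, mul_comm]
  · rw [prod_update_of_mem (by simpa using hj), prod_const, zero_mul, zero_mul, if_neg hj]

end Matrix

theorem Finset.sum_filter_mem_mul_eq_sum_Icc_card {α β : Type*} [Fintype α] [DecidableEq α]
    [NonUnitalNonAssocSemiring β] (j : α) (f : Finset α → β) (g : ℕ → β) :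
    ∑ s with j ∈ s, f s * g #s =
      ∑ t ∈ Icc 1 (Fintype.card α), (∑ s ∈ powersetCard t univ with j ∈ s, f s) * g t := by
  rw [← sum_fiberwise_of_maps_to (g := card) (t := Icc 1 (Fintype.card α))]
  · refine sum_congr rfl fun t _ => ?_
    rw [sum_mul, powersetCard_eq_filter, powerset_univ, filter_comm]
    exact sum_congr rfl fun s hs => by rw [(mem_filter.1 (mem_filter.1 hs).1).2]
  · intro s hs
    exact mem_Icc.2 ⟨card_pos.2 ⟨j, (mem_filter.1 hs).2⟩, card_le_univ s⟩

/-- For an `m × n` complex matrix `A` and `λ ∈ ℝ`, for all `i, j`,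
`det((λI_m + AAᴴ)_{j.}(aᴴ_{i.})) = r₁ λ^{m-1} + ⋯ + r_m`, where
`r_s = Σ_{α ∈ I_{s,m}{j}} |((AAᴴ)_{j.}(aᴴ_{i.}))_α^α|` (for `s = m` this sum is the single
principal minor over all indices, i.e. `det((AAᴴ)_{j.}(aᴴ_{i.}))`). -/
theorem det_smul_one_add_self_mul_conjTranspose_updateRow
    (m n : ℕ) (A : Matrix (Fin m) (Fin n) ℂ) (lam : ℝ) (i : Fin n) (j : Fin m) :
    (((lam : ℂ) • (1 : Matrix (Fin m) (Fin m) ℂ) + A * Aᴴ).updateRow j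
        (fun k => Aᴴ i k)).det =
      ∑ s ∈ Finset.Icc 1 m,
        (∑ α ∈ (Finset.powersetCard s (Finset.univ : Finset (Fin m))).filter
            (fun α => j ∈ α),
          ((A * Aᴴ).updateRow j (fun k => Aᴴ i k)).pminor α) * (lam : ℂ) ^ (m - s) := by
  rw [det_updateRow_smul_one_add, Fintype.card_fin]
  exact (sum_filter_mem_mul_eq_sum_Icc_card j ((A * Aᴴ).updateRow j (fun k => Aᴴ i k)).pminor
    fun s => (lam : ℂ) ^ (m - s)).trans (by rw [Fintype.card_fin])
end

section
/- Let A be an m×n complex matrix of rank r, where r < min{m,n} or r = n < m. Then the projection matrix Q = AA⁺ satisfies, for all i, j ∈ {1,…,m}: q_{ij} = ( Σ_{α ∈ I_{r,m}{j}} |(((AA*)_{j.}(g_{i.}))_α^α| ) / ( Σ_{α ∈ I_{r,m}} |((AA*))_α^α| ), where g_{i.} denotes the i-th row of AA*. -/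
/-!
`Q = A X` is a Hermitian idempotent of rank `r`, so `Q = U Uᴴ` with `Uᴴ U = 1` for an `m × r`
matrix `U` (its eigenvectors of eigenvalue `1`), and `Q G Q = G` for `G = A Aᴴ` gives
`G = U S Uᴴ` with `S = Uᴴ G U`, which is invertible because `G` has rank `r`.

The sum of the `k × k` principal minors of `M` is the coefficient of `t ^ k` in `det (1 + t M)`,
so by the Weinstein–Aronszajn identity the `r × r` principal minors of `U W` sum to `det (W U)`
whenever `W U` is `r × r`. Replacing row `j` of `U S Uᴴ` by its row `i` amounts to replacing
row `j` of `U` by row `i` of `U`, so the full sum of minors becomes `det S` times the determinant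
of a rank-one perturbation of `1`. The minors avoiding `j` are also those of the matrix whose
row `j` is zero; subtracting them leaves `det S * (U Uᴴ) i j = det S * Q i j`.
-/

open Matrix

section PrincipalMinors

open Finset Polynomial

variable {R : Type*} [CommRing R] {m ι : Type*} [Fintype m] [DecidableEq m] [Fintype ι]
  [DecidableEq ι]

theorem Matrix.sum_det_submatrix_mul_comm (U : Matrix m ι R) (W : Matrix ι m R) (k : ℕ) :
    ∑ s ∈ powersetCard k univ, ((U * W).submatrix (Subtype.val : s → m) Subtype.val).det =
      ∑ s ∈ powersetCard k univ, ((W * U).submatrix (Subtype.val : s → ι) Subtype.val).det := by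
  rw [← coeff_det_one_add_X_smul_eq_sum_minors, ← coeff_det_one_add_X_smul_eq_sum_minors,
    Matrix.map_mul, Matrix.map_mul, ← Matrix.smul_mul, det_one_add_mul_comm, Matrix.mul_smul]

theorem Matrix.sum_det_submatrix_powersetCard_card (M : Matrix ι ι R) :
    ∑ s ∈ powersetCard (Fintype.card ι) univ,
      (M.submatrix (Subtype.val : s → ι) Subtype.val).det = M.det := by
  rw [← card_univ, powersetCard_self, sum_singleton]
  exact det_submatrix_equiv_self (Equiv.subtypeUnivEquiv mem_univ) M

theorem Matrix.sum_det_submatrix_mul_eq_det_mul (U : Matrix m ι R) (W : Matrix ι m R) :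
    ∑ s ∈ powersetCard (Fintype.card ι) univ,
      ((U * W).submatrix (Subtype.val : s → m) Subtype.val).det = (W * U).det := by
  rw [sum_det_submatrix_mul_comm, sum_det_submatrix_powersetCard_card]

omit [Fintype m] in
theorem Matrix.submatrix_updateRow_of_notMem {α : Type*} (M : Matrix m m α) (c : m → α) {j : m}
    {s : Finset m} (hj : j ∉ s) :
    (M.updateRow j c).submatrix (Subtype.val : s → m) (Subtype.val : s → m) =
      M.submatrix Subtype.val Subtype.val := by
  ext a b
  rw [submatrix_apply, submatrix_apply, updateRow_ne (ne_of_mem_of_not_mem a.2 hj)]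

omit [Fintype m] in
theorem Matrix.det_submatrix_updateRow_zero_of_mem (M : Matrix m m R) {j : m} {s : Finset m}
    (hj : j ∈ s) : ((M.updateRow j 0).submatrix (Subtype.val : s → m) Subtype.val).det = 0 :=
  det_eq_zero_of_row_eq_zero ⟨j, hj⟩ fun _ => by simp

omit [Fintype m] in
theorem Matrix.sum_filter_mem_det_submatrix_updateRow (M : Matrix m m R) (c : m → R) (j : m)
    (S : Finset (Finset m)) :
    ∑ s ∈ S with j ∈ s, ((M.updateRow j c).submatrix (Subtype.val : s → m) Subtype.val).det =
      ∑ s ∈ S, ((M.updateRow j c).submatrix (Subtype.val : s → m) Subtype.val).det -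
        ∑ s ∈ S, ((M.updateRow j 0).submatrix (Subtype.val : s → m) Subtype.val).det := by
  have hmem : ∑ s ∈ S with j ∈ s,
      ((M.updateRow j 0).submatrix (Subtype.val : s → m) Subtype.val).det = 0 :=
    sum_eq_zero fun s hs => det_submatrix_updateRow_zero_of_mem M (mem_filter.1 hs).2
  have hnotMem : ∑ s ∈ S with j ∉ s,
      ((M.updateRow j c).submatrix (Subtype.val : s → m) Subtype.val).det =
        ∑ s ∈ S with j ∉ s,
          ((M.updateRow j 0).submatrix (Subtype.val : s → m) Subtype.val).det :=
    sum_congr rfl fun s hs => by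
      rw [submatrix_updateRow_of_notMem M c (mem_filter.1 hs).2,
        submatrix_updateRow_of_notMem M 0 (mem_filter.1 hs).2]
  rw [← sum_filter_add_sum_filter_not S (j ∈ ·), ← sum_filter_add_sum_filter_not S (j ∈ ·)
    (fun s : Finset m => ((M.updateRow j 0).submatrix (Subtype.val : s → m) Subtype.val).det),
    hmem, hnotMem]
  ring

theorem Matrix.det_mul_updateRow_of_mul_eq_one {W : Matrix ι m R} {U : Matrix m ι R}
    (hWU : W * U = 1) (j : m) (v : ι → R) :
    (W * U.updateRow j v).det = 1 + (v - U j) ⬝ᵥ fun k => W k j := by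
  have hrankOne : W * U.updateRow j v =
      1 + replicateCol Unit (fun k => W k j) * replicateRow Unit (v - U j) := by
    rw [← hWU]
    ext k l
    simp only [mul_apply, updateRow_apply, mul_ite, add_apply, replicateCol_apply,
      replicateRow_apply, sum_const, card_univ, Fintype.card_unit, one_smul, Pi.sub_apply]
    have hsplit : ∀ x, (if x = j then W k x * v l else W k x * U x l) =
        W k x * U x l + if x = j then W k x * (v l - U j l) else 0 := by
      intro x
      split_ifs with h
      · subst h; ring
      · ring
    rw [sum_congr rfl fun x _ => hsplit x, sum_add_distrib, sum_ite_eq']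
    simp
  rw [hrankOne, det_one_add_replicateCol_mul_replicateRow]

theorem Matrix.sum_det_submatrix_mul_mul_of_mul_eq_one {U : Matrix m ι R} {W : Matrix ι m R}
    (hWU : W * U = 1) (T : Matrix ι ι R) :
    ∑ s ∈ powersetCard (Fintype.card ι) univ,
      ((U * T * W).submatrix (Subtype.val : s → m) Subtype.val).det = T.det := by
  rw [Matrix.mul_assoc, sum_det_submatrix_mul_eq_det_mul, Matrix.mul_assoc, hWU, Matrix.mul_one]

theorem Matrix.sum_filter_mem_det_submatrix_updateRow_of_mul_eq_one {U : Matrix m ι R}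
    {W : Matrix ι m R} (hWU : W * U = 1) (T : Matrix ι ι R) (i j : m) :
    ∑ s ∈ powersetCard (Fintype.card ι) univ with j ∈ s,
      (((U * T * W).updateRow j ((U * T * W) i)).submatrix (Subtype.val : s → m)
        Subtype.val).det = T.det * (U * W) i j := by
  have hsum (v : ι → R) : ∑ s ∈ powersetCard (Fintype.card ι) univ,
      (((U * T * W).updateRow j (v ᵥ* (T * W))).submatrix (Subtype.val : s → m)
        Subtype.val).det = T.det * (1 + (v - U j) ⬝ᵥ fun k => W k j) := by
    rw [Matrix.mul_assoc, ← updateRow_mul, sum_det_submatrix_mul_eq_det_mul, Matrix.mul_assoc,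
      det_mul, det_mul_updateRow_of_mul_eq_one hWU]
  have hrow : (U * T * W) i = U i ᵥ* (T * W) := by
    rw [Matrix.mul_assoc]; rfl
  rw [sum_filter_mem_det_submatrix_updateRow, hrow, ← zero_vecMul (T * W), hsum, hsum,
    mul_apply']
  simp only [sub_dotProduct, zero_dotProduct]
  ring

end PrincipalMinors

theorem Matrix.IsHermitian.exists_mul_conjTranspose_eq_of_isIdempotentElem {𝕜 n : Type*}
    [RCLike 𝕜] [Fintype n] [DecidableEq n] {Q : Matrix n n 𝕜} (hQ : Q.IsHermitian)
    (hQQ : IsIdempotentElem Q) :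
    ∃ U : Matrix n {k // hQ.eigenvalues k ≠ 0} 𝕜, Uᴴ * U = 1 ∧ U * Uᴴ = Q := by
  set V : Matrix n n 𝕜 := (hQ.eigenvectorUnitary : Matrix n n 𝕜)
  have heig (k : n) : hQ.eigenvalues k = 0 ∨ hQ.eigenvalues k = 1 :=
    hQQ.spectrum_subset ℝ (hQ.eigenvalues_mem_spectrum_real k)
  refine ⟨V.submatrix id Subtype.val, ?_, ?_⟩
  · rw [conjTranspose_submatrix, ← submatrix_mul _ _ _ _ _ Function.bijective_id,
      ← star_eq_conjTranspose, Unitary.coe_star_mul_self]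
    exact submatrix_one_embedding (Function.Embedding.subtype _)
  · conv_rhs => rw [hQ.spectral_theorem]
    ext a b
    rw [Unitary.conjStarAlgAut_apply, mul_apply, mul_apply]
    simp only [mul_diagonal, submatrix_apply, conjTranspose_apply, id, star_apply,
      Function.comp_apply]
    rw [← Finset.sum_subtype {k | hQ.eigenvalues k ≠ 0} (by simp) fun k => V a k * star (V b k),
      Finset.sum_filter]
    refine Finset.sum_congr rfl fun k _ => ?_
    rcases heig k with h | h <;> simp [h, V]

theorem Matrix.isUnit_of_card_le_rank {K ι : Type*} [Field K] [Fintype ι] [DecidableEq ι]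
    {M : Matrix ι ι K} (h : Fintype.card ι ≤ M.rank) : IsUnit M := by
  rw [← mulVec_surjective_iff_isUnit, ← coe_mulVecLin, ← LinearMap.range_eq_top]
  apply Submodule.eq_top_of_finrank_eq
  exact le_antisymm (Submodule.finrank_le _)
    ((Module.finrank_fintype_fun_eq_card K).trans_le h)

theorem projection_self_mul_moorePenrose_det_repr_general
    (m n r : ℕ) (A : Matrix (Fin m) (Fin n) ℂ) (hA : A.rank = r)
    (X : Matrix (Fin n) (Fin m) ℂ)
    (h1 : A * X * A = A)
    (h3 : (A * X)ᴴ = A * X)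
    (i j : Fin m) :
    (A * X) i j =
      (∑ α ∈ (Finset.powersetCard r (Finset.univ : Finset (Fin m))).filter
          (fun α => j ∈ α),
        ((A * Aᴴ).updateRow j (fun k => (A * Aᴴ) i k)).pminor α) /
      (∑ α ∈ Finset.powersetCard r (Finset.univ : Finset (Fin m)),
        (A * Aᴴ).pminor α) := by
  have hQ : (A * X).IsHermitian := h3
  have hQQ : IsIdempotentElem (A * X) := by
    rw [IsIdempotentElem, ← Matrix.mul_assoc, h1]
  have hrankQ : (A * X).rank = r := by
    refine le_antisymm (hA ▸ rank_mul_le_left A X) ?_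
    calc r = (A * X * A).rank := by rw [h1, hA]
      _ ≤ (A * X).rank := rank_mul_le_left _ _
  obtain ⟨U, hUU, hUQ⟩ := hQ.exists_mul_conjTranspose_eq_of_isIdempotentElem hQQ
  have hcard := hQ.rank_eq_card_non_zero_eigs.symm.trans hrankQ
  set S := Uᴴ * (A * Aᴴ) * U
  have hG : A * Aᴴ = U * S * Uᴴ := by
    have hQG : A * X * (A * Aᴴ) = A * Aᴴ := by rw [← Matrix.mul_assoc, h1]
    have hGQ : A * Aᴴ * (A * X) = A * Aᴴ := by
      have := congrArg conjTranspose hQG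
      rwa [conjTranspose_mul, h3, conjTranspose_mul, conjTranspose_conjTranspose] at this
    calc A * Aᴴ = A * X * (A * Aᴴ) * (A * X) := by rw [hQG, hGQ]
      _ = U * S * Uᴴ := by simp only [S, ← hUQ, Matrix.mul_assoc]
  have hS : S.det ≠ 0 := by
    refine (isUnit_iff_isUnit_det S).1 (isUnit_of_card_le_rank ?_) |>.ne_zero
    calc Fintype.card _ = (A * Aᴴ).rank := by
          open scoped ComplexOrder in rw [rank_self_mul_conjTranspose, hA, hcard]
      _ ≤ S.rank := hG ▸ (rank_mul_le_left _ _).trans (rank_mul_le_right _ _)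
  rw [← hcard, hG]
  unfold Matrix.pminor
  rw [sum_filter_mem_det_submatrix_updateRow_of_mul_eq_one hUU,
    sum_det_submatrix_mul_mul_of_mul_eq_one hUU, hUQ, mul_div_cancel_left₀ _ hS]

/-- Determinantal representation of the projection matrix `Q = AA⁺`,
where `A⁺ = X` is the Moore–Penrose inverse of `A` (characterized by the Penrose
equations), for `A` of rank `r` with `r < min m n` or `r = n < m`. -/
theorem projection_self_mul_moorePenrose_det_repr
    (m n r : ℕ) (A : Matrix (Fin m) (Fin n) ℂ) (hA : A.rank = r)
    (hr : r < min m n ∨ (r = n ∧ n < m))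
    (X : Matrix (Fin n) (Fin m) ℂ)
    (h1 : A * X * A = A) (h2 : X * A * X = X)
    (h3 : (A * X)ᴴ = A * X) (h4 : (X * A)ᴴ = X * A)
    (i j : Fin m) :
    (A * X) i j =
      (∑ α ∈ (Finset.powersetCard r (Finset.univ : Finset (Fin m))).filter
          (fun α => j ∈ α),
        ((A * Aᴴ).updateRow j (fun k => (A * Aᴴ) i k)).pminor α) /
      (∑ α ∈ Finset.powersetCard r (Finset.univ : Finset (Fin m)),
        (A * Aᴴ).pminor α) :=
  projection_self_mul_moorePenrose_det_repr_general m n r A hA X h1 h3 i j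
end

section
/- Let A ∈ ℂ^{n×n} and k = Ind A. Then A^D = lim_{λ→0⁺} A^k (λ I_n + A^{k+1})^{−1}, where the limit is taken as the real parameter λ tends to 0 from the right (for all sufficiently small λ > 0 the matrix λI_n + A^{k+1} is invertible). -/
/-!
Put `C = A X`, an idempotent, and `D = X ^ (k + 1)`; all these elements commute. The Drazin
relations give `A ^ (k + 1) (1 - C) = 0` and `A ^ (k + 1) D = C`, hence
`(λ + A ^ (k + 1)) (1 - C + λ D) = λ (1 + λ D)` and `X (λ + A ^ (k + 1)) = (1 + λ D) A ^ k`.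
As `1 + λ D → 1`, for small `λ ≠ 0` both `λ + A ^ (k + 1)` and `1 + λ D` are invertible, and
`A ^ k (λ + A ^ (k + 1))⁻¹ = (1 + λ D)⁻¹ X → X`.
-/

open Filter Topology Matrix

section DrazinAlgebra

variable {R : Type*} [Ring R] {A X : R} {k : ℕ}

theorem pow_succ_mul_one_sub_mul_eq_zero (h1 : A ^ (k + 1) * X = A ^ k) :
    A ^ (k + 1) * (1 - A * X) = 0 := by
  rw [mul_sub, mul_one, ← mul_assoc, ← pow_succ, pow_succ' A (k + 1), mul_assoc, h1,
    ← pow_succ', sub_self]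

theorem pow_succ_mul_pow_succ_eq_mul (h2 : X * A * X = X) (h3 : Commute A X) :
    A ^ (k + 1) * X ^ (k + 1) = A * X := by
  have hidem : IsIdempotentElem (A * X) := by
    rw [IsIdempotentElem, mul_assoc, ← mul_assoc X, h2]
  rw [← h3.mul_pow, hidem.pow_succ_eq]

theorem pow_succ_mul_pow_eq (h2 : X * A * X = X) (h3 : Commute A X) :
    X ^ (k + 1) * A ^ k = X := by
  have hXXA : X * (X * A) = X := by rw [← h3.eq, ← mul_assoc, h2]
  have hX : ∀ j : ℕ, X * (X * A) ^ j = X := by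
    intro j
    induction j with
    | zero => rw [pow_zero, mul_one]
    | succ j ih => rw [pow_succ, ← mul_assoc, ih, hXXA]
  rw [pow_succ', mul_assoc, ← h3.symm.mul_pow, hX]

variable {𝕜 : Type*} [CommSemiring 𝕜] [Algebra 𝕜 R]

theorem smul_one_add_pow_succ_mul_eq (h1 : A ^ (k + 1) * X = A ^ k) (h2 : X * A * X = X)
    (h3 : Commute A X) (c : 𝕜) :
    (c • 1 + A ^ (k + 1)) * (1 - A * X + c • X ^ (k + 1)) = c • (1 + c • X ^ (k + 1)) := by
  rw [add_mul, smul_one_mul, mul_add, pow_succ_mul_one_sub_mul_eq_zero h1, mul_smul_comm,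
    pow_succ_mul_pow_succ_eq_mul h2 h3, zero_add, ← smul_add]
  congr 1
  abel

theorem mul_smul_one_add_pow_succ_eq (h1 : A ^ (k + 1) * X = A ^ k) (h2 : X * A * X = X)
    (h3 : Commute A X) (c : 𝕜) :
    X * (c • 1 + A ^ (k + 1)) = (1 + c • X ^ (k + 1)) * A ^ k := by
  rw [mul_add, mul_smul_one, ← (h3.pow_left (k + 1)).eq, h1, add_mul, one_mul, smul_mul_assoc,
    pow_succ_mul_pow_eq h2 h3, add_comm]

theorem isUnit_smul_one_add_pow_succ (h1 : A ^ (k + 1) * X = A ^ k) (h2 : X * A * X = X)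
    (h3 : Commute A X) {c : 𝕜} (hc : IsUnit c) (hu : IsUnit (1 + c • X ^ (k + 1))) :
    IsUnit (c • 1 + A ^ (k + 1)) := by
  have hcomm : Commute (c • 1 + A ^ (k + 1)) (1 - A * X + c • X ^ (k + 1)) := by
    have hA : Commute A (1 - A * X + c • X ^ (k + 1)) :=
      ((Commute.one_right A).sub_right ((Commute.refl A).mul_right h3)).add_right
        ((h3.pow_right (k + 1)).smul_right c)
    exact ((Commute.one_left _).smul_left c).add_left (hA.pow_left (k + 1))
  have hprod : IsUnit (c • (1 + c • X ^ (k + 1))) := by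
    rw [Algebra.smul_def]
    exact (hc.map (algebraMap 𝕜 R)).mul hu
  rw [← smul_one_add_pow_succ_mul_eq h1 h2 h3 c] at hprod
  exact (hcomm.isUnit_mul_iff.mp hprod).1

end DrazinAlgebra

namespace Matrix

variable {ι 𝕜 : Type*} [Fintype ι] [DecidableEq ι] [Field 𝕜] [TopologicalSpace 𝕜]
  [IsTopologicalDivisionRing 𝕜]

theorem eventually_isUnit_one_add_smul [T1Space 𝕜] (D : Matrix ι ι 𝕜) :
    ∀ᶠ c in 𝓝 (0 : 𝕜), IsUnit (1 + c • D) := by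
  have hdet : ContinuousAt (fun c : 𝕜 => (1 + c • D).det) 0 := by fun_prop
  filter_upwards [hdet.eventually_ne (y := 0) (by simp)] with c hc
  exact (isUnit_iff_isUnit_det _).mpr hc.isUnit

theorem tendsto_inv_one_add_smul (D : Matrix ι ι 𝕜) :
    Tendsto (fun c : 𝕜 => (1 + c • D)⁻¹) (𝓝 0) (𝓝 1) := by
  have hinv : ContinuousAt Inv.inv (1 : Matrix ι ι 𝕜) := by
    refine continuousAt_matrix_inv _ ?_
    rw [det_one, Ring.inverse_eq_inv']
    exact continuousAt_inv₀ one_ne_zero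
  have hlin : Tendsto (fun c : 𝕜 => 1 + c • D) (𝓝 0) (𝓝 1) := by
    simpa using (by fun_prop : Continuous fun c : 𝕜 => 1 + c • D).tendsto 0
  have h := hinv.tendsto.comp hlin
  rwa [inv_one] at h

end Matrix

theorem drazinInverse_limit_repr_general
    (n k : ℕ) (A : Matrix (Fin n) (Fin n) ℂ)
    (X : Matrix (Fin n) (Fin n) ℂ)
    (h1 : A ^ (k + 1) * X = A ^ k) (h2 : X * A * X = X) (h3 : A * X = X * A) :
    (∀ᶠ lam : ℝ in nhdsWithin 0 (Set.Ioi 0),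
        IsUnit ((lam : ℂ) • (1 : Matrix (Fin n) (Fin n) ℂ) + A ^ (k + 1))) ∧
    Filter.Tendsto
      (fun lam : ℝ =>
        A ^ k * ((lam : ℂ) • (1 : Matrix (Fin n) (Fin n) ℂ) + A ^ (k + 1))⁻¹)
      (nhdsWithin 0 (Set.Ioi 0)) (nhds X) := by
  have hcomm : Commute A X := h3
  have hofReal : Tendsto (fun lam : ℝ => (lam : ℂ)) (𝓝[>] 0) (𝓝 0) :=
    (Complex.continuous_ofReal.tendsto' 0 0 Complex.ofReal_zero).mono_left nhdsWithin_le_nhds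
  have hu := hofReal.eventually (eventually_isUnit_one_add_smul (X ^ (k + 1)))
  have hM : ∀ᶠ lam : ℝ in 𝓝[>] 0, IsUnit ((lam : ℂ) • 1 + A ^ (k + 1)) := by
    filter_upwards [hu, self_mem_nhdsWithin] with lam hu hpos
    exact isUnit_smul_one_add_pow_succ h1 h2 hcomm (Ne.isUnit (by exact_mod_cast hpos.ne')) hu
  refine ⟨hM, ?_⟩
  have hlim := ((tendsto_inv_one_add_smul (X ^ (k + 1))).comp hofReal).mul_const X
  rw [one_mul] at hlim
  refine hlim.congr' ?_
  filter_upwards [hu, hM] with lam hu hM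
  simp only [Function.comp_apply, nonsing_inv_eq_ringInverse]
  rw [Ring.inverse_mul_eq_iff_eq_mul _ _ _ hu, ← mul_assoc,
    Ring.eq_mul_inverse_iff_mul_eq _ _ _ hM, mul_smul_one_add_pow_succ_eq h1 h2 hcomm]

/-- Limit representation of the Drazin inverse: if `k = Ind A` (the least
`k` with `rank A^{k+1} = rank A^k`) and `X = A^D` is the Drazin inverse of `A`
(characterized by `A^{k+1} X = A^k`, `XAX = X`, `AX = XA`), then for all sufficiently small
real `λ > 0` the matrix `λI_n + A^{k+1}` is invertible, and
`A^k (λ I_n + A^{k+1})⁻¹ → A^D` as `λ → 0⁺`. -/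
theorem drazinInverse_limit_repr
    (n k : ℕ) (A : Matrix (Fin n) (Fin n) ℂ)
    (hk : IsLeast {j : ℕ | (A ^ (j + 1)).rank = (A ^ j).rank} k)
    (X : Matrix (Fin n) (Fin n) ℂ)
    (h1 : A ^ (k + 1) * X = A ^ k) (h2 : X * A * X = X) (h3 : A * X = X * A) :
    (∀ᶠ lam : ℝ in nhdsWithin 0 (Set.Ioi 0),
        IsUnit ((lam : ℂ) • (1 : Matrix (Fin n) (Fin n) ℂ) + A ^ (k + 1))) ∧
    Filter.Tendsto
      (fun lam : ℝ =>
        A ^ k * ((lam : ℂ) • (1 : Matrix (Fin n) (Fin n) ℂ) + A ^ (k + 1))⁻¹)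
      (nhdsWithin 0 (Set.Ioi 0)) (nhds X) :=
  drazinInverse_limit_repr_general n k A X h1 h2 h3
end

section
/- Let A ∈ ℂ^{n×n} with Ind A = k. Then for all i, j ∈ {1,…,n}, the matrix A^{k+1}_{i.}(a^{(k)}_{j.}), obtained from A^{k+1} by replacing its i-th row with the j-th row of A^k, has rank at most rank A^{k+1}. -/
open Matrix

/-! Every row of `A^{k+1} = A * A^k` is a combination of rows of `A^k`, so the row space of
`A^{k+1}` sits inside that of `A^k`; at the index the two ranks agree, so the row spaces are equal.
Hence the `j`-th row of `A^k` already lies in the row space of `A^{k+1}`, and putting it in place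
of the `i`-th row cannot enlarge that row space. -/

namespace Matrix

open Submodule

variable {l m n R : Type*}

theorem span_row_mul_le [Semiring R] [Fintype m] (B : Matrix l m R) (C : Matrix m n R) :
    span R (Set.range (B * C).row) ≤ span R (Set.range C.row) := by
  rw [← range_vecMulLinear C, span_le]
  rintro _ ⟨r, rfl⟩
  exact ⟨B r, rfl⟩

theorem span_row_mul_eq_of_rank_eq [Field R] [Finite l] [Fintype m] [Fintype n]
    (B : Matrix l m R) (C : Matrix m n R) (h : (B * C).rank = C.rank) :
    span R (Set.range (B * C).row) = span R (Set.range C.row) :=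
  eq_of_le_of_finrank_eq (span_row_mul_le B C) <| by
    rw [← rank_eq_finrank_span_row, ← rank_eq_finrank_span_row, h]

theorem rank_updateRow_le_of_mem_span_row [Field R] [Finite m] [Fintype n] [DecidableEq m]
    (M : Matrix m n R) (i : m) {v : n → R} (hv : v ∈ span R (Set.range M.row)) :
    (M.updateRow i v).rank ≤ M.rank := by
  rw [rank_eq_finrank_span_row, rank_eq_finrank_span_row M]
  refine finrank_mono (span_le.2 ?_)
  rintro _ ⟨r, rfl⟩
  by_cases hr : r = i
  · subst hr
    rw [row_apply', updateRow_self]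
    exact hv
  · rw [row_apply', updateRow_ne hr]
    exact subset_span ⟨r, rfl⟩

end Matrix

/-- If `A ∈ ℂ^{n×n}` with `Ind A = k` (the least `k` with
`rank A^{k+1} = rank A^k`), then for all `i, j`, the matrix obtained from `A^{k+1}` by
replacing its `i`-th row with the `j`-th row of `A^k` has rank at most `rank A^{k+1}`. -/
theorem rank_updateRow_pow_succ_le
    (n k : ℕ) (A : Matrix (Fin n) (Fin n) ℂ)
    (hk : IsLeast {j : ℕ | (A ^ (j + 1)).rank = (A ^ j).rank} k)
    (i j : Fin n) :
    ((A ^ (k + 1)).updateRow i (fun l => (A ^ k) j l)).rank ≤ (A ^ (k + 1)).rank := by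
  have hrank : (A * A ^ k).rank = (A ^ k).rank := by rw [← pow_succ']; exact hk.1
  have hspan : Submodule.span ℂ (Set.range (A ^ (k + 1)).row) =
      Submodule.span ℂ (Set.range (A ^ k).row) := by
    rw [pow_succ']
    exact span_row_mul_eq_of_rank_eq A (A ^ k) hrank
  refine rank_updateRow_le_of_mem_span_row _ i ?_
  rw [hspan]
  exact Submodule.subset_span ⟨j, rfl⟩
end

section
/- Let A ∈ ℂ^{n×n} with Ind A = k and rank A^{k+1} = rank A^k = r ≤ n. Then the entries a^D_{ij} of the Drazin inverse A^D satisfy, for all i, j ∈ {1,…,n}: a^D_{ij} = ( Σ_{α ∈ I_{r,n}{j}} |((A^{k+1}_{j.}(a^{(k)}_{i.}))_α^α| ) / ( Σ_{α ∈ I_{r,n}} |((A^{k+1}))_α^α| ), and also a^D_{ij} = ( Σ_{β ∈ J_{r,n}{i}} |((A^{k+1}_{.i}(a^{(k)}_{.j}))_β^β| ) / ( Σ_{β ∈ J_{r,n}} |((A^{k+1}))_β^β| ). -/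
/-!
Put `B = A^{k+1}`, `G = A^k`, `p(t) = det (t + B)` and `adj (t + B) = ∑ t^d W_d`. Expanding the
determinants, the denominator of the row formula is the coefficient `p_{n-r}` and its numerator
is `(G W_{n-r})_{ij}`, because `∑_l a^{(k)}_{il} adj (t + B)_{lj} = det ((t + B)_{j.}(a^{(k)}_{i.}))`.

`Y = X^{k+1}` is the group inverse of `B`, and `X = G Y` with `G Y B = G`. As `ker B² = ker B`,
the eigenvalue `0` of `B` is semisimple, so `p` vanishes at `0` to order exactly `n - r`.
Comparing coefficients in `(t + B) adj (t + B) = p(t)` below that order gives `B W_d = 0`, and at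
that order `Y B W_{n-r} = p_{n-r} Y`; hence `G W_{n-r} = G Y B W_{n-r} = p_{n-r} X`.
The column formula is the row formula for the transposed matrices.
-/

open Matrix

open Polynomial Finset Module

namespace Matrix

variable {R : Type*} [CommRing R] {ι : Type*} [Fintype ι]

structure IsGroupInverse (M Y : Matrix ι ι R) : Prop where
  mul_inv_mul : M * Y * M = M
  inv_mul_inv : Y * M * Y = Y
  commute : Commute M Y

namespace IsGroupInverse

variable {M Y : Matrix ι ι R}

theorem neg (hMY : IsGroupInverse M Y) : IsGroupInverse (-M) (-Y) where
  mul_inv_mul := by simp [hMY.mul_inv_mul]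
  inv_mul_inv := by simp [hMY.inv_mul_inv]
  commute := hMY.commute.neg_left.neg_right

theorem transpose (hMY : IsGroupInverse M Y) : IsGroupInverse Mᵀ Yᵀ where
  mul_inv_mul := by rw [← transpose_mul, ← transpose_mul, ← mul_assoc, hMY.mul_inv_mul]
  inv_mul_inv := by rw [← transpose_mul, ← transpose_mul, ← mul_assoc, hMY.inv_mul_inv]
  commute := by
    change Mᵀ * Yᵀ = Yᵀ * Mᵀ
    rw [← transpose_mul, ← transpose_mul, hMY.commute.eq]

end IsGroupInverse

theorem rank_neg (M : Matrix ι ι R) : (-M).rank = M.rank := by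
  have h : (-M).mulVecLin = -M.mulVecLin := by ext; simp
  rw [rank, h, LinearMap.range_neg, ← rank]

variable [DecidableEq ι]

structure IsDrazinInverse (A X : Matrix ι ι R) (k : ℕ) : Prop where
  pow_succ_mul : A ^ (k + 1) * X = A ^ k
  mul_mul_self : X * A * X = X
  commute : Commute A X

namespace IsDrazinInverse

variable {A X : Matrix ι ι R} {k : ℕ}

theorem pow_mul_pow_succ (hAX : IsDrazinInverse A X k) : A ^ k * X ^ (k + 1) = X := by
  have hXX : A * X * X = X := by rw [hAX.commute.eq, hAX.mul_mul_self]
  have hpow : ∀ j : ℕ, (A * X) ^ j * X = X := fun j => by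
    induction j with
    | zero => simp
    | succ j ih => rw [pow_succ, mul_assoc, hXX, ih]
  rw [pow_succ, ← mul_assoc, ← hAX.commute.mul_pow, hpow]

theorem pow_mul_pow_succ_mul_pow_succ (hAX : IsDrazinInverse A X k) :
    A ^ k * X ^ (k + 1) * A ^ (k + 1) = A ^ k := by
  rw [hAX.pow_mul_pow_succ, ← (hAX.commute.pow_left (k + 1)).eq, hAX.pow_succ_mul]

theorem pow_succ_mul_pow_succ_mul_pow (hAX : IsDrazinInverse A X k) :
    A ^ (k + 1) * X ^ (k + 1) * A ^ k = A ^ k := by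
  rw [mul_assoc, ← (hAX.commute.pow_pow k (k + 1)).eq, hAX.pow_mul_pow_succ, hAX.pow_succ_mul]

theorem pow_succ_mul_pow (hAX : IsDrazinInverse A X k) : X ^ (k + 1) * A ^ k = X := by
  rw [← (hAX.commute.pow_pow k (k + 1)).eq, hAX.pow_mul_pow_succ]

theorem isGroupInverse (hAX : IsDrazinInverse A X k) :
    IsGroupInverse (A ^ (k + 1)) (X ^ (k + 1)) where
  mul_inv_mul :=
    calc A ^ (k + 1) * X ^ (k + 1) * A ^ (k + 1) = A * (A ^ k * X ^ (k + 1) * A ^ (k + 1)) := by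
          rw [pow_succ' A k]; simp only [mul_assoc]
      _ = A ^ (k + 1) := by rw [hAX.pow_mul_pow_succ_mul_pow_succ, pow_succ']
  inv_mul_inv := by
    rw [mul_assoc, pow_succ' A, mul_assoc, hAX.pow_mul_pow_succ, pow_succ, mul_assoc,
      ← mul_assoc X, hAX.mul_mul_self]
  commute := hAX.commute.pow_pow _ _

end IsDrazinInverse

theorem det_smul_add_eq_sum (x : R) (Q N : Matrix ι ι R) :
    det (x • Q + N) = ∑ T : Finset ι, x ^ #T * det (of (T.piecewise Q.row N.row)) := by
  let D : (ι → R) [⋀^ι]→ₗ[R] R := detRowAlternating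
  change D ((x • Q).row + N.row) = _
  rw [D.map_add_univ]
  refine sum_congr rfl fun T _ => ?_
  have hT : T.piecewise (x • Q).row N.row =
      T.piecewise (fun i => x • T.piecewise Q.row N.row i) (T.piecewise Q.row N.row) := by
    ext i j
    by_cases hi : i ∈ T <;> simp [Finset.piecewise, hi, row]
  rw [hT]
  exact (D.toMultilinearMap.map_piecewise_smul _ _ T).trans (by rw [prod_const, smul_eq_mul]; rfl)

theorem det_of_compl_piecewise_diagonal (S α : Finset ι) (N : Matrix ι ι R) :
    det (of (αᶜ.piecewise (diagonal fun i => if i ∈ S then 0 else 1 : Matrix ι ι R).row N.row)) =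
      if S ⊆ α then (N.submatrix (↑) (↑) : Matrix α α R).det else 0 := by
  split_ifs with hSα
  · rw [← det_piecewise_one_eq_submatrix_det]
    congr 2
    ext i j
    by_cases hi : i ∈ α
    · simp [Finset.piecewise, hi, row]
    · have hiS : i ∉ S := fun h => hi (hSα h)
      simp [Finset.piecewise, hi, hiS, row, diagonal_apply, one_apply]
  · obtain ⟨i, hiS, hiα⟩ := not_subset.mp hSα
    exact det_eq_zero_of_row_eq_zero i fun j => by
      simp [Finset.piecewise, hiS, hiα, row, diagonal_apply]

theorem coeff_det_X_smul_diagonal_add (S : Finset ι) (N : Matrix ι ι R) {r : ℕ}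
    (hr : r ≤ Fintype.card ι) :
    (det ((X : R[X]) • diagonal (fun i => if i ∈ S then 0 else 1) + N.map C)).coeff
        (Fintype.card ι - r) =
      ∑ α ∈ (powersetCard r univ).filter (S ⊆ ·), (N.submatrix (↑) (↑) : Matrix α α R).det := by
  have hterm : ∀ α : Finset ι,
      ((X : R[X]) ^ #αᶜ * det (of (αᶜ.piecewise
        (diagonal fun i => if i ∈ S then 0 else 1 : Matrix ι ι R[X]).row (N.map C).row))).coeff
          (Fintype.card ι - r) =
        if #α = r ∧ S ⊆ α then (N.submatrix (↑) (↑) : Matrix α α R).det else 0 := by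
    intro α
    have hα : #α ≤ Fintype.card ι := card_le_univ α
    rw [det_of_compl_piecewise_diagonal, submatrix_map, ← RingHom.mapMatrix_apply,
      ← RingHom.map_det, ← map_zero C, ← apply_ite C, mul_comm, coeff_C_mul_X_pow, card_compl]
    by_cases hαr : #α = r
    · simp [hαr]
    · simp [hαr, show Fintype.card ι - r ≠ Fintype.card ι - #α by omega]
  rw [det_smul_add_eq_sum, ← (compl_involutive (α := Finset ι)).bijective.sum_comp,
    finsetSum_coeff, sum_congr rfl fun α _ => hterm α, ← sum_filter]
  congr 1
  ext α
  simp [mem_powersetCard]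

theorem det_updateRow_eq_vecMul_adjugate (M : Matrix ι ι R) (j : ι) (w : ι → R) :
    (M.updateRow j w).det = (w ᵥ* M.adjugate) j := by
  rw [← det_transpose, ← updateCol_transpose, ← cramer_apply, cramer_eq_adjugate_mulVec,
    ← adjugate_transpose, mulVec_transpose]

theorem charmatrix_neg (B : Matrix ι ι R) :
    charmatrix (-B) =
      (X : R[X]) • diagonal (fun i => if i ∈ (∅ : Finset ι) then 0 else 1) + B.map C := by
  refine Matrix.ext fun a b => ?_
  by_cases hab : a = b <;> simp [hab]

theorem charmatrix_neg_updateRow (B : Matrix ι ι R) (j : ι) (v : ι → R) :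
    (charmatrix (-B)).updateRow j (fun l => C (v l)) =
      (X : R[X]) • diagonal (fun i => if i ∈ ({j} : Finset ι) then 0 else 1) +
        (B.updateRow j v).map C := by
  refine Matrix.ext fun a b => ?_
  by_cases haj : a = j
  · subst haj; simp [diagonal_apply]
  · by_cases hab : a = b
    · subst hab; simp [haj]
    · simp [updateRow_ne haj, hab]

theorem coeff_charpoly_neg (B : Matrix ι ι R) {r : ℕ} (hr : r ≤ Fintype.card ι) :
    (-B).charpoly.coeff (Fintype.card ι - r) =
      ∑ α ∈ powersetCard r univ, (B.submatrix (Subtype.val : α → ι) Subtype.val).det := by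
  rw [charpoly, charmatrix_neg, coeff_det_X_smul_diagonal_add _ _ hr]
  simp

noncomputable def charmatrixAdjugateCoeff (M : Matrix ι ι R) (d : ℕ) : Matrix ι ι R :=
  (matPolyEquiv (charmatrix M).adjugate).coeff d

theorem sum_det_submatrix_updateRow (B : Matrix ι ι R) (j : ι) (v : ι → R) {r : ℕ}
    (hr : r ≤ Fintype.card ι) :
    ∑ α ∈ (powersetCard r univ).filter (j ∈ ·),
        ((B.updateRow j v).submatrix (↑) (↑) : Matrix α α R).det =
      (v ᵥ* (-B).charmatrixAdjugateCoeff (Fintype.card ι - r)) j := by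
  have h := congrArg (coeff · (Fintype.card ι - r))
    (det_updateRow_eq_vecMul_adjugate (charmatrix (-B)) j fun l => C (v l))
  simp only [charmatrix_neg_updateRow, coeff_det_X_smul_diagonal_add _ _ hr,
    singleton_subset_iff] at h
  rw [h]
  simp [vecMul, dotProduct, finsetSum_coeff, charmatrixAdjugateCoeff, matPolyEquiv_coeff_apply]

theorem X_sub_C_mul_matPolyEquiv_adjugate (M : Matrix ι ι R) :
    (X - C M) * matPolyEquiv (charmatrix M).adjugate = M.charpoly.map (algebraMap R _) := by
  rw [← matPolyEquiv_charmatrix, ← map_mul, mul_adjugate, ← matPolyEquiv_smul_one]; rfl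

theorem mul_charmatrixAdjugateCoeff_zero (M : Matrix ι ι R) :
    M * M.charmatrixAdjugateCoeff 0 = -(M.charpoly.coeff 0 • 1) := by
  have h := congrArg (coeff · 0) (X_sub_C_mul_matPolyEquiv_adjugate M)
  simp only [sub_mul, coeff_sub, coeff_X_mul_zero, coeff_C_mul, coeff_map,
    Algebra.algebraMap_eq_smul_one] at h
  rw [charmatrixAdjugateCoeff, ← h, zero_sub, neg_neg]

theorem charmatrixAdjugateCoeff_sub_mul_succ (M : Matrix ι ι R) (d : ℕ) :
    M.charmatrixAdjugateCoeff d - M * M.charmatrixAdjugateCoeff (d + 1) =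
      M.charpoly.coeff (d + 1) • 1 := by
  have h := congrArg (coeff · (d + 1)) (X_sub_C_mul_matPolyEquiv_adjugate M)
  simp only [sub_mul, coeff_sub, coeff_X_mul, coeff_C_mul, coeff_map,
    Algebra.algebraMap_eq_smul_one] at h
  exact h

namespace IsGroupInverse

variable {M Y : Matrix ι ι R}

theorem pow_mul_mul_pow (hMY : IsGroupInverse M Y) (k : ℕ) : Y ^ k * M * M ^ k = M := by
  induction k with
  | zero => simp
  | succ k ih =>
    have hYMM : Y * M * M = M := by rw [← hMY.commute.eq, hMY.mul_inv_mul]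
    calc Y ^ (k + 1) * M * M ^ (k + 1) = Y ^ k * (Y * M * M) * M ^ k := by
          rw [pow_succ, pow_succ']; simp only [mul_assoc]
      _ = M := by rw [hYMM, ih]

theorem maxGenEigenspace_toLin'_zero (hMY : IsGroupInverse M Y) :
    Module.End.maxGenEigenspace (toLin' M) 0 = LinearMap.ker (toLin' M) := by
  refine le_antisymm ?_ ?_
  · rw [← Module.End.iSup_genEigenspace_eq]
    refine iSup_le fun k => ?_
    intro v hv
    simp only [Module.End.genEigenspace_nat, zero_smul, sub_zero, LinearMap.mem_ker,
      ← toLin'_pow, toLin'_apply] at hv ⊢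
    rw [← hMY.pow_mul_mul_pow k, ← mulVec_mulVec, hv, mulVec_zero]
  · exact Module.End.eigenspace_le_maxGenEigenspace.trans' (by simp)

theorem mul_charmatrixAdjugateCoeff_eq_zero (hMY : IsGroupInverse M Y) {m : ℕ}
    (hp : ∀ d < m, M.charpoly.coeff d = 0) {d : ℕ} (hd : d < m) :
    M * M.charmatrixAdjugateCoeff d = 0 := by
  induction d with
  | zero => rw [mul_charmatrixAdjugateCoeff_zero, hp 0 hd, zero_smul, neg_zero]
  | succ d ih =>
    have hrec := charmatrixAdjugateCoeff_sub_mul_succ M d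
    rw [hp _ hd, zero_smul, sub_eq_zero] at hrec
    calc M * M.charmatrixAdjugateCoeff (d + 1)
        = M * Y * M * M.charmatrixAdjugateCoeff (d + 1) := by rw [hMY.mul_inv_mul]
      _ = Y * (M * (M * M.charmatrixAdjugateCoeff (d + 1))) := by
          rw [hMY.commute.eq, mul_assoc, mul_assoc]
      _ = 0 := by rw [← hrec, ih (by omega), mul_zero]

theorem inv_mul_mul_charmatrixAdjugateCoeff (hMY : IsGroupInverse M Y) {m : ℕ}
    (hp : ∀ d < m, M.charpoly.coeff d = 0) :
    Y * M * M.charmatrixAdjugateCoeff m = -(M.charpoly.coeff m • Y) := by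
  cases m with
  | zero => rw [mul_assoc, mul_charmatrixAdjugateCoeff_zero, mul_neg, mul_smul_comm, mul_one]
  | succ d =>
    have hrec := congrArg (Y * ·) (charmatrixAdjugateCoeff_sub_mul_succ M d)
    have hY : Y * M.charmatrixAdjugateCoeff d = 0 := by
      rw [← hMY.inv_mul_inv, mul_assoc Y, hMY.commute.eq, ← mul_assoc, mul_assoc,
        hMY.mul_charmatrixAdjugateCoeff_eq_zero hp (Nat.lt_succ_self d), mul_zero]
    simp only [mul_sub, hY, zero_sub, mul_smul_comm, mul_one, ← mul_assoc] at hrec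
    rw [← hrec, neg_neg]

variable {K : Type*} [Field K] {B Y G : Matrix ι ι K}

theorem natTrailingDegree_charpoly (hBY : IsGroupInverse B Y) :
    B.charpoly.natTrailingDegree = Fintype.card ι - B.rank := by
  rw [← charpoly_toLin', ← LinearMap.finrank_maxGenEigenspace_zero_eq,
    hBY.maxGenEigenspace_toLin'_zero]
  have h := LinearMap.finrank_range_add_finrank_ker (toLin' B)
  rw [Module.finrank_fintype_fun_eq_card] at h
  have : B.rank = finrank K (LinearMap.range (toLin' B)) := rfl
  omega

theorem mul_apply_eq_div (hBY : IsGroupInverse B Y) (hG : G * Y * B = G) (i j : ι) :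
    (G * Y) i j =
      (∑ α ∈ (powersetCard B.rank univ).filter (j ∈ ·),
          ((B.updateRow j (G i)).submatrix (Subtype.val : α → ι) Subtype.val).det) /
        ∑ α ∈ powersetCard B.rank univ, (B.submatrix (Subtype.val : α → ι) Subtype.val).det := by
  have hr : B.rank ≤ Fintype.card ι := rank_le_card_width B
  set m := Fintype.card ι - B.rank
  have hord : (-B).charpoly.natTrailingDegree = m := by
    rw [hBY.neg.natTrailingDegree_charpoly, rank_neg]
  have hpm : (-B).charpoly.coeff m ≠ 0 := by
    rw [← hord]
    exact trailingCoeff_nonzero_iff_nonzero.mpr (charpoly_monic _).ne_zero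
  have hW : Y * B * (-B).charmatrixAdjugateCoeff m = (-B).charpoly.coeff m • Y := by
    simpa using hBY.neg.inv_mul_mul_charmatrixAdjugateCoeff
      fun d hd => coeff_eq_zero_of_lt_natTrailingDegree (hord ▸ hd)
  have hGW : G * (-B).charmatrixAdjugateCoeff m = (-B).charpoly.coeff m • (G * Y) := by
    conv_lhs => rw [← hG]
    rw [mul_assoc, mul_assoc, ← mul_assoc Y, hW, mul_smul_comm]
  rw [sum_det_submatrix_updateRow _ _ _ hr, ← coeff_charpoly_neg _ hr, ← mul_apply_eq_vecMul,
    hGW, smul_apply, smul_eq_mul, mul_div_cancel_left₀ _ hpm]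

theorem inv_mul_apply_eq_div (hBY : IsGroupInverse B Y) (hG : B * Y * G = G) (i j : ι) :
    (Y * G) i j =
      (∑ β ∈ (powersetCard B.rank univ).filter (i ∈ ·),
          ((B.updateCol i fun l => G l j).submatrix (Subtype.val : β → ι) Subtype.val).det) /
        ∑ β ∈ powersetCard B.rank univ, (B.submatrix (Subtype.val : β → ι) Subtype.val).det := by
  have hGt : Gᵀ * Yᵀ * Bᵀ = Gᵀ := by rw [← transpose_mul, ← transpose_mul, ← mul_assoc, hG]
  rw [← transpose_apply (Y * G), transpose_mul, hBY.transpose.mul_apply_eq_div hGt, rank_transpose]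
  simp only [updateRow_transpose, ← transpose_submatrix, det_transpose]
  rfl

end IsGroupInverse

end Matrix

theorem drazinInverse_entry_det_repr_general
    (n k r : ℕ) (A : Matrix (Fin n) (Fin n) ℂ)
    (hr1 : (A ^ (k + 1)).rank = r)
    (X : Matrix (Fin n) (Fin n) ℂ)
    (h1 : A ^ (k + 1) * X = A ^ k) (h2 : X * A * X = X) (h3 : A * X = X * A)
    (i j : Fin n) :
    X i j =
      (∑ α ∈ (Finset.powersetCard r (Finset.univ : Finset (Fin n))).filter
          (fun α => j ∈ α),
        ((A ^ (k + 1)).updateRow j (fun l => (A ^ k) i l)).pminor α) /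
      (∑ α ∈ Finset.powersetCard r (Finset.univ : Finset (Fin n)),
        (A ^ (k + 1)).pminor α) ∧
    X i j =
      (∑ β ∈ (Finset.powersetCard r (Finset.univ : Finset (Fin n))).filter
          (fun β => i ∈ β),
        ((A ^ (k + 1)).updateCol i (fun l => (A ^ k) l j)).pminor β) /
      (∑ β ∈ Finset.powersetCard r (Finset.univ : Finset (Fin n)),
        (A ^ (k + 1)).pminor β) := by
  have hAX : IsDrazinInverse A X k := ⟨h1, h2, h3⟩
  subst hr1
  constructor
  · rw [← hAX.pow_mul_pow_succ]
    exact hAX.isGroupInverse.mul_apply_eq_div hAX.pow_mul_pow_succ_mul_pow_succ i j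
  · rw [← hAX.pow_succ_mul_pow]
    exact hAX.isGroupInverse.inv_mul_apply_eq_div hAX.pow_succ_mul_pow_succ_mul_pow i j

/-- Determinantal representations of the Drazin inverse `X = A^D`
(characterized by `A^{k+1} X = A^k`, `XAX = X`, `AX = XA`) of `A ∈ ℂ^{n×n}`, where
`k = Ind A` and `rank A^{k+1} = rank A^k = r ≤ n`. -/
theorem drazinInverse_entry_det_repr
    (n k r : ℕ) (A : Matrix (Fin n) (Fin n) ℂ)
    (hk : IsLeast {j : ℕ | (A ^ (j + 1)).rank = (A ^ j).rank} k)
    (hr1 : (A ^ (k + 1)).rank = r) (hr2 : (A ^ k).rank = r) (hrn : r ≤ n)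
    (X : Matrix (Fin n) (Fin n) ℂ)
    (h1 : A ^ (k + 1) * X = A ^ k) (h2 : X * A * X = X) (h3 : A * X = X * A)
    (i j : Fin n) :
    X i j =
      (∑ α ∈ (Finset.powersetCard r (Finset.univ : Finset (Fin n))).filter
          (fun α => j ∈ α),
        ((A ^ (k + 1)).updateRow j (fun l => (A ^ k) i l)).pminor α) /
      (∑ α ∈ Finset.powersetCard r (Finset.univ : Finset (Fin n)),
        (A ^ (k + 1)).pminor α) ∧
    X i j =
      (∑ β ∈ (Finset.powersetCard r (Finset.univ : Finset (Fin n))).filter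
          (fun β => i ∈ β),
        ((A ^ (k + 1)).updateCol i (fun l => (A ^ k) l j)).pminor β) /
      (∑ β ∈ Finset.powersetCard r (Finset.univ : Finset (Fin n)),
        (A ^ (k + 1)).pminor β) :=
  drazinInverse_entry_det_repr_general n k r A hr1 X h1 h2 h3 i j
end

section
/- Let A ∈ ℂ^{n×n} with Ind A = k and rank A^{k+1} = rank A^k = r ≤ n. Then the matrix P = A^D A satisfies, for all i, j ∈ {1,…,n}: p_{ij} = ( Σ_{β ∈ J_{r,n}{i}} |((A^{k+1}_{.i}(a^{(k+1)}_{.j}))_β^β| ) / ( Σ_{β ∈ J_{r,n}} |((A^{k+1}))_β^β| ), where a^{(k+1)}_{.j} denotes the j-th column of A^{k+1}. -/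
/-!
Write `Q = X A` and `M = A ^ (k + 1)`. Then `Q` is an idempotent of rank `r` with `Q M = M = M Q`,
so `Q = U V` with `V U = 1` and `U` of width `r`, and `M = U W V` with `W = V M U`, which is
invertible with inverse `V X ^ (k + 1) U`.

The sum of the principal `r`-minors of `U N` is `det (N U)`: both are the coefficient of `t ^ r`
in `det (1 + t U N) = det (1 + t N U)`. Hence the denominator is `det W`. Splitting off the minors
that avoid `i`, the numerator becomes `det W * (det (V' U) - det (V'' U))`, where `V'` and `V''`
are `V` with its `i`-th column replaced by its `j`-th column and by `0`. Both are rank-one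
perturbations of `V U = 1`, and the difference of their determinants is `(U V) i j = Q i j`.
-/

open Matrix

section DrazinIdentities

variable {M : Type*} [Monoid M] {a x : M} {k : ℕ}

theorem isIdempotentElem_mul_of_mul_mul_eq_self (h : x * a * x = x) :
    IsIdempotentElem (x * a) := by
  rw [IsIdempotentElem, ← mul_assoc, h]

theorem mul_mul_pow_succ_eq_of_pow_succ_mul_eq (hc : Commute a x) (h : a ^ (k + 1) * x = a ^ k) :
    x * a * a ^ (k + 1) = a ^ (k + 1) := by
  rw [mul_assoc, ← pow_succ', ((hc.pow_left _).eq).symm, pow_succ', mul_assoc, h, ← pow_succ']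

theorem pow_succ_mul_mul_eq_of_pow_succ_mul_eq (h : a ^ (k + 1) * x = a ^ k) :
    a ^ (k + 1) * (x * a) = a ^ (k + 1) := by
  rw [← mul_assoc, h, ← pow_succ]

theorem pow_succ_mul_pow_succ_eq_of_mul_mul_eq_self (hc : Commute a x) (h : x * a * x = x) :
    x ^ (k + 1) * a ^ (k + 1) = x * a := by
  rw [← hc.symm.mul_pow, (isIdempotentElem_mul_of_mul_mul_eq_self h).pow_succ_eq]

end DrazinIdentities

namespace Matrix

theorem mul_updateCol_col {R : Type*} [NonUnitalNonAssocSemiring R] {l n o : Type*} [Fintype n]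
    [DecidableEq o] (L : Matrix l n R) (N : Matrix n o R) (i j : o) :
    L * N.updateCol i (fun k => N k j) = (L * N).updateCol i (fun k => (L * N) k j) := by
  rw [mul_updateCol]
  rfl

theorem mul_updateCol_zero {R : Type*} [NonUnitalNonAssocSemiring R] {l n o : Type*} [Fintype n]
    [DecidableEq o] (L : Matrix l n R) (N : Matrix n o R) (i : o) :
    L * N.updateCol i 0 = (L * N).updateCol i 0 := by
  rw [mul_updateCol, mulVec_zero]

variable {m : Type*} [Fintype m] [DecidableEq m]

theorem exists_mul_eq_one_and_mul_eq_of_isIdempotentElem {K : Type*} [Field K]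
    {Q : Matrix m m K} (hQ : IsIdempotentElem Q) {r : ℕ} (hr : Q.rank = r) :
    ∃ (U : Matrix m (Fin r) K) (V : Matrix (Fin r) m K), V * U = 1 ∧ U * V = Q := by
  subst hr
  set L := Q.mulVecLin
  let e : LinearMap.range L ≃ₗ[K] (Fin Q.rank → K) :=
    LinearEquiv.ofFinrankEq _ _ (Module.finrank_fin_fun K).symm
  have hL : ∀ y : LinearMap.range L, L.rangeRestrict y = y := by
    rintro ⟨_, x, rfl⟩
    ext1
    simp [L, mulVec_mulVec, hQ.eq]
  refine ⟨LinearMap.toMatrix' ((LinearMap.range L).subtype ∘ₗ e.symm.toLinearMap),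
    LinearMap.toMatrix' (e.toLinearMap ∘ₗ L.rangeRestrict), ?_, ?_⟩
  · rw [← LinearMap.toMatrix'_comp, ← LinearMap.toMatrix'_id]
    exact congrArg _ (LinearMap.ext fun x => by simp [hL])
  · rw [← LinearMap.toMatrix'_comp]
    refine (congrArg _ (LinearMap.ext fun x => ?_)).trans (LinearMap.toMatrix'_toLin' Q)
    simp [L]

open Polynomial in
theorem coeff_det_one_add_X_smul_card {R : Type*} [CommRing R] (M : Matrix m m R) :
    (det (1 + (X : R[X]) • M.map C)).coeff (Fintype.card m) = M.det := by
  rw [coeff_det_one_add_X_smul_eq_sum_minors, ← Finset.card_univ, Finset.powersetCard_self,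
    Finset.sum_singleton]
  exact det_submatrix_equiv_self (Equiv.subtypeUnivEquiv Finset.mem_univ) M

open Polynomial in
theorem sum_pminor_mul {r : ℕ} (U : Matrix m (Fin r) ℂ) (N : Matrix (Fin r) m ℂ) :
    ∑ β ∈ Finset.powersetCard r Finset.univ, (U * N).pminor β = (N * U).det := by
  calc ∑ β ∈ Finset.powersetCard r Finset.univ, (U * N).pminor β
      = (det (1 + (X : ℂ[X]) • U.map C * N.map C)).coeff r := by
        rw [smul_mul, ← Matrix.map_mul, coeff_det_one_add_X_smul_eq_sum_minors]
        rfl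
    _ = (det (1 + (X : ℂ[X]) • (N * U).map C)).coeff (Fintype.card (Fin r)) := by
        rw [det_one_add_mul_comm, Matrix.mul_smul, ← Matrix.map_mul, Fintype.card_fin]
    _ = (N * U).det := coeff_det_one_add_X_smul_card _

theorem pminor_updateCol_of_notMem (M : Matrix m m ℂ) {i : m} {β : Finset m} (hi : i ∉ β)
    (c : m → ℂ) : (M.updateCol i c).pminor β = M.pminor β := by
  unfold pminor
  congr 1
  ext a b
  simp [updateCol_ne (ne_of_mem_of_not_mem b.2 hi)]

theorem pminor_updateCol_zero_of_mem (M : Matrix m m ℂ) {i : m} {β : Finset m} (hi : i ∈ β) :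
    (M.updateCol i 0).pminor β = 0 :=
  det_eq_zero_of_column_eq_zero ⟨i, hi⟩ fun _ => by simp

theorem sum_filter_mem_pminor_updateCol (M : Matrix m m ℂ) (S : Finset (Finset m)) (i : m)
    (c : m → ℂ) :
    ∑ β ∈ S.filter (i ∈ ·), (M.updateCol i c).pminor β =
      ∑ β ∈ S, (M.updateCol i c).pminor β - ∑ β ∈ S, (M.updateCol i 0).pminor β := by
  have hzero : ∑ β ∈ S.filter (i ∈ ·), (M.updateCol i 0).pminor β = 0 :=
    Finset.sum_eq_zero fun β hβ => pminor_updateCol_zero_of_mem M (Finset.mem_filter.1 hβ).2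
  have hsame : ∑ β ∈ S.filter (i ∉ ·), (M.updateCol i c).pminor β =
      ∑ β ∈ S.filter (i ∉ ·), (M.updateCol i 0).pminor β :=
    Finset.sum_congr rfl fun β hβ => by
      rw [pminor_updateCol_of_notMem _ (Finset.mem_filter.1 hβ).2,
        pminor_updateCol_of_notMem _ (Finset.mem_filter.1 hβ).2]
  rw [← S.sum_filter_add_sum_filter_not (i ∈ ·),
    ← S.sum_filter_add_sum_filter_not (i ∈ ·), hzero, hsame]
  ring

theorem det_updateCol_mul_of_mul_eq_one {R : Type*} [CommRing R] {r : Type*} [Fintype r]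
    [DecidableEq r] {V : Matrix r m R} {U : Matrix m r R} (hVU : V * U = 1) (i : m)
    (c : r → R) : (V.updateCol i c * U).det = 1 + U i ⬝ᵥ (c - Vᵀ i) := by
  have hrankOne :
      V.updateCol i c * U = 1 + replicateCol (Fin 1) (c - Vᵀ i) * replicateRow (Fin 1) (U i) := by
    rw [← hVU]
    ext t t'
    have hcol : ∀ s, V.updateCol i c t s = V t s + if s = i then c t - V t i else 0 := by
      intro s
      by_cases hs : s = i <;> simp [hs]
    simp [mul_apply, hcol, add_mul, Finset.sum_add_distrib]
  rw [hrankOne]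
  exact det_one_add_replicateCol_mul_replicateRow _ _

theorem sum_filter_mem_pminor_updateCol_mul {r : ℕ} (U : Matrix m (Fin r) ℂ)
    (W : Matrix (Fin r) (Fin r) ℂ) {V : Matrix (Fin r) m ℂ} (hVU : V * U = 1) (i j : m) :
    ∑ β ∈ (Finset.powersetCard r Finset.univ).filter (i ∈ ·),
        ((U * W * V).updateCol i (fun l => (U * W * V) l j)).pminor β =
      W.det * (U * V) i j := by
  rw [sum_filter_mem_pminor_updateCol, Matrix.mul_assoc, ← mul_updateCol_col,
    ← mul_updateCol_col, ← mul_updateCol_zero, ← mul_updateCol_zero, sum_pminor_mul,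
    sum_pminor_mul]
  rw [Matrix.mul_assoc, Matrix.mul_assoc, det_mul, det_mul, det_updateCol_mul_of_mul_eq_one hVU,
    det_updateCol_mul_of_mul_eq_one hVU, mul_apply']
  simp only [dotProduct_sub, zero_sub, dotProduct_neg]
  ring

end Matrix

theorem drazinInverse_mul_entry_det_repr_general
    (n k r : ℕ) (A : Matrix (Fin n) (Fin n) ℂ)
    (hr1 : (A ^ (k + 1)).rank = r)
    (X : Matrix (Fin n) (Fin n) ℂ)
    (h1 : A ^ (k + 1) * X = A ^ k) (h2 : X * A * X = X) (h3 : A * X = X * A)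
    (i j : Fin n) :
    (X * A) i j =
      (∑ β ∈ (Finset.powersetCard r (Finset.univ : Finset (Fin n))).filter
          (fun β => i ∈ β),
        ((A ^ (k + 1)).updateCol i (fun l => (A ^ (k + 1)) l j)).pminor β) /
      (∑ β ∈ Finset.powersetCard r (Finset.univ : Finset (Fin n)),
        (A ^ (k + 1)).pminor β) := by
  have hc : Commute A X := h3
  have hQM := mul_mul_pow_succ_eq_of_pow_succ_mul_eq hc h1
  have hMQ := pow_succ_mul_mul_eq_of_pow_succ_mul_eq h1
  have hQr : (X * A).rank = r := by
    refine le_antisymm ?_ ?_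
    · rw [← pow_succ_mul_pow_succ_eq_of_mul_mul_eq_self (k := k) hc h2, ← hr1]
      exact rank_mul_le_right _ _
    · rw [← hr1, ← hQM]
      exact rank_mul_le_left _ _
  obtain ⟨U, V, hVU, hUV⟩ := exists_mul_eq_one_and_mul_eq_of_isIdempotentElem
    (isIdempotentElem_mul_of_mul_mul_eq_self h2) hQr
  set W := V * A ^ (k + 1) * U
  have hM : U * W * V = A ^ (k + 1) := by
    simp only [W, ← Matrix.mul_assoc, hUV, hQM]
    rw [Matrix.mul_assoc, hUV, hMQ]
  have hW : W.det ≠ 0 := by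
    have hpow : A ^ (k + 1) * X ^ (k + 1) = X * A := by
      rw [(hc.pow_pow _ _).eq, pow_succ_mul_pow_succ_eq_of_mul_mul_eq_self hc h2]
    refine det_ne_zero_of_right_inverse (B := V * X ^ (k + 1) * U) ?_
    calc W * (V * X ^ (k + 1) * U) = V * (A ^ (k + 1) * (U * V)) * X ^ (k + 1) * U := by
          simp only [W, Matrix.mul_assoc]
      _ = V * (U * V) * U := by rw [hUV, hMQ, Matrix.mul_assoc V, hpow]
      _ = 1 := by rw [← Matrix.mul_assoc, hVU, Matrix.one_mul, hVU]
  rw [← hM, sum_filter_mem_pminor_updateCol_mul U W hVU, Matrix.mul_assoc, sum_pminor_mul,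
    Matrix.mul_assoc, hVU, Matrix.mul_one, hUV, mul_div_cancel_left₀ _ hW]

/-- Determinantal representation of `P = A^D A`, where `X = A^D` is the
Drazin inverse of `A ∈ ℂ^{n×n}` (characterized by `A^{k+1} X = A^k`, `XAX = X`,
`AX = XA`), `k = Ind A` and `rank A^{k+1} = rank A^k = r ≤ n`. -/
theorem drazinInverse_mul_entry_det_repr
    (n k r : ℕ) (A : Matrix (Fin n) (Fin n) ℂ)
    (hk : IsLeast {j : ℕ | (A ^ (j + 1)).rank = (A ^ j).rank} k)
    (hr1 : (A ^ (k + 1)).rank = r) (hr2 : (A ^ k).rank = r) (hrn : r ≤ n)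
    (X : Matrix (Fin n) (Fin n) ℂ)
    (h1 : A ^ (k + 1) * X = A ^ k) (h2 : X * A * X = X) (h3 : A * X = X * A)
    (i j : Fin n) :
    (X * A) i j =
      (∑ β ∈ (Finset.powersetCard r (Finset.univ : Finset (Fin n))).filter
          (fun β => i ∈ β),
        ((A ^ (k + 1)).updateCol i (fun l => (A ^ (k + 1)) l j)).pminor β) /
      (∑ β ∈ Finset.powersetCard r (Finset.univ : Finset (Fin n)),
        (A ^ (k + 1)).pminor β) :=
  drazinInverse_mul_entry_det_repr_general n k r A hr1 X h1 h2 h3 i j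
end

section
/- Let A ∈ ℂ^{m×n} and W ∈ ℂ^{n×m}, let k = max{Ind(AW), Ind(WA)}, and suppose rank((AW)^k) = r. Set V̄^k = (AW)^k A with columns v̄^{(k)}_{.j}, and Ū^k = A(WA)^k with rows ū^{(k)}_{i.}. Then the entries a^{d,W}_{ij} of the W-weighted Drazin inverse A_{d,W} satisfy, for all i ∈ {1,…,m} and j ∈ {1,…,n}: a^{d,W}_{ij} = ( Σ_{β ∈ J_{r,m}{i}} |((((AW)^{k+2})_{.i}(v̄^{(k)}_{.j}))_β^β| ) / ( Σ_{β ∈ J_{r,m}} |(((AW)^{k+2}))_β^β| ), and also a^{d,W}_{ij} = ( Σ_{α ∈ I_{r,n}{j}} |((((WA)^{k+2})_{j.}(ū^{(k)}_{i.}))_α^α| ) / ( Σ_{α ∈ I_{r,n}} |(((WA)^{k+2}))_α^α| ). -/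
/-!
Put `B = AW` and `M = B^(k+2)`. The equations give `B^(k+1) (XW) = B^k` and `X = B^s (XW)^s X`,
so the columns of `X` lie in the range of `M`, `M X = B^k A`, and `rank M = rank M² = r`.
For `x = M y` and `b = M x`, Cramer's rule for `N = 1 + tM` applied to `N x = x + t b` gives
`det (N.updateCol i (t b)) = x i · det N - det (N.updateCol i x)`. The coefficients of `t^r`
are the numerator, `x i` times the denominator, and a sum of principal minors of order `r + 1`
of `M.updateCol i x`, which vanish since that matrix has rank at most `rank M`.
The denominator is, up to sign, the coefficient of `t^(m-r)` in the characteristic polynomial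
of `M`; it is nonzero because `rank M² = rank M` makes `ker M` the whole generalized
`0`-eigenspace. The row formula is the transposed argument for `(WA)^(k+2)`, whose rank lies
between those of `(AW)^(k+3)` and `(AW)^(k+1)`.
-/

open Matrix

open Polynomial Finset

theorem Module.End.maxGenEigenspace_zero_eq_ker_of_ker_sq {K V : Type*} [Field K]
    [AddCommGroup V] [Module K V] (f : Module.End K V)
    (h : LinearMap.ker (f ^ 2) = LinearMap.ker f) :
    f.maxGenEigenspace 0 = LinearMap.ker f := by
  ext v
  simp only [Module.End.mem_maxGenEigenspace, zero_smul, sub_zero]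
  refine ⟨fun ⟨n, hn⟩ => ?_, fun hv => ⟨1, by simpa using hv⟩⟩
  have hv : v ∈ LinearMap.ker (f ^ (1 + n)) := by
    rw [add_comm, pow_succ']
    simp [Module.End.mul_apply, hn]
  rwa [← Module.End.ker_pow_constant (by rw [pow_one, h]) n, pow_one] at hv

namespace Matrix

theorem submatrix_updateCol_of_notMem {ι α : Type*} [DecidableEq ι] (M : Matrix ι ι α)
    {i : ι} (b : ι → α) {s : Finset ι} (hi : i ∉ s) :
    ((M.updateCol i b).submatrix (↑) (↑) : Matrix s s α) = M.submatrix (↑) (↑) := by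
  ext k l
  exact updateCol_ne (ne_of_mem_of_not_mem l.2 hi)

theorem det_submatrix_updateCol_zero_of_mem {ι R : Type*} [DecidableEq ι] [CommRing R]
    (M : Matrix ι ι R) {i : ι} {s : Finset ι} (hi : i ∈ s) :
    ((M.updateCol i 0).submatrix (↑) (↑) : Matrix s s R).det = 0 :=
  det_eq_zero_of_column_eq_zero ⟨i, hi⟩ fun _ => by simp

section CommRing

variable {ι R : Type*} [Fintype ι] [DecidableEq ι] [CommRing R]

theorem det_updateCol_mulVec (M : Matrix ι ι R) (i : ι) (v : ι → R) :
    (M.updateCol i (M *ᵥ v)).det = v i * M.det := by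
  rw [← smul_eq_mul, ← det_updateCol_sum]
  congr 2
  ext k
  simp [mulVec, dotProduct, mul_comm]

theorem coeff_det_one_add_X_smul_updateCol (M : Matrix ι ι R) (i : ι) (b : ι → R) (r : ℕ) :
    ((1 + (X : R[X]) • M.map C).updateCol i ((X : R[X]) • (C ∘ b))).det.coeff r =
      ∑ s ∈ (powersetCard r (univ : Finset ι)).filter (i ∈ ·),
        ((M.updateCol i b).submatrix (↑) (↑) : Matrix s s R).det := by
  have hcol : ∀ (c : ι → R) (v : ι → R[X]),
      (1 + (X : R[X]) • (M.updateCol i c).map C).updateCol i v =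
        (1 + (X : R[X]) • M.map C).updateCol i v := by
    intro c v
    ext k l
    by_cases hl : l = i <;> simp [hl]
  -- Column `i` of `1 + X • M.updateCol i b` is `e_i + X • b`; split the determinant along it.
  have hsplit : (1 + (X : R[X]) • (M.updateCol i b).map C).det =
      ((1 + (X : R[X]) • M.map C).updateCol i ((X : R[X]) • (C ∘ b))).det +
        (1 + (X : R[X]) • (M.updateCol i 0).map C).det := by
    set N := 1 + (X : R[X]) • (M.updateCol i b).map C
    have hN : N = N.updateCol i ((X : R[X]) • (C ∘ b) + Pi.single i 1) := by
      refine Matrix.ext fun k l => ?_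
      by_cases hl : l = i <;> simp [N, hl, one_apply, Pi.single_apply, add_comm]
    have hN0 : 1 + (X : R[X]) • (M.updateCol i 0).map C = N.updateCol i (Pi.single i 1) := by
      refine Matrix.ext fun k l => ?_
      by_cases hl : l = i <;> simp [N, hl, one_apply, Pi.single_apply]
    conv_lhs => rw [hN]
    rw [hN0, det_updateCol_add, hcol]
  rw [eq_sub_of_add_eq hsplit.symm, coeff_sub, coeff_det_one_add_X_smul_eq_sum_minors,
    coeff_det_one_add_X_smul_eq_sum_minors, ← sum_filter_add_sum_filter_not _ (i ∈ ·),
    ← sum_filter_add_sum_filter_not (powersetCard r univ) (i ∈ ·),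
    sum_congr rfl fun s hs => det_submatrix_updateCol_zero_of_mem M (mem_filter.1 hs).2,
    sum_congr rfl fun s hs =>
      congrArg det (submatrix_updateCol_of_notMem M b (mem_filter.1 hs).2),
    sum_congr rfl fun s hs =>
      congrArg det (submatrix_updateCol_of_notMem M 0 (mem_filter.1 hs).2)]
  simp

end CommRing

section Field

variable {ι K : Type*} [Fintype ι] [DecidableEq ι] [Field K]

theorem det_submatrix_eq_zero_of_rank_lt (M : Matrix ι ι K) {s : Finset ι}
    (h : M.rank < s.card) : (M.submatrix (↑) (↑) : Matrix s s K).det = 0 := by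
  by_contra hdet
  have hsub := rank_submatrix_le M (Subtype.val : s → ι) (Subtype.val : s → ι)
  rw [rank_of_isUnit _ ((isUnit_iff_isUnit_det _).2 (Ne.isUnit hdet)), Fintype.card_coe] at hsub
  omega

theorem rank_updateCol_mulVec_le (M : Matrix ι ι K) (i : ι) (y : ι → K) :
    (M.updateCol i (M *ᵥ y)).rank ≤ M.rank := by
  have hfac : M.updateCol i (M *ᵥ y) = M * (1 : Matrix ι ι K).updateCol i y := by
    rw [mul_updateCol, mul_one]
  rw [hfac]
  exact rank_mul_le_left _ _

theorem sum_minors_mul_apply (M : Matrix ι ι K) {r : ℕ} (hr : M.rank ≤ r) {x : ι → K}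
    (hx : ∃ y, M *ᵥ y = x) (i : ι) :
    (∑ s ∈ powersetCard r (univ : Finset ι),
        (M.submatrix (↑) (↑) : Matrix s s K).det) * x i =
      ∑ s ∈ (powersetCard r (univ : Finset ι)).filter (i ∈ ·),
        ((M.updateCol i (M *ᵥ x)).submatrix (↑) (↑) : Matrix s s K).det := by
  obtain ⟨y, hy⟩ := hx
  set N := 1 + (X : K[X]) • M.map C
  have hNx : N *ᵥ (C ∘ x) = (X : K[X]) • (C ∘ (M *ᵥ x)) + C ∘ x := by
    funext k
    simp only [N, add_mulVec, one_mulVec, smul_mulVec, Pi.add_apply, Pi.smul_apply,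
      Function.comp_apply, smul_eq_mul, ← RingHom.map_mulVec]
    ring
  have hdet := det_updateCol_mulVec N i (C ∘ x)
  rw [hNx, det_updateCol_add] at hdet
  have hvanish : (N.updateCol i (C ∘ x)).det.coeff r = 0 := by
    rw [← coeff_X_mul, ← det_updateCol_smul, coeff_det_one_add_X_smul_updateCol]
    refine sum_eq_zero fun s hs => det_submatrix_eq_zero_of_rank_lt _ ?_
    rw [(mem_powersetCard.1 (mem_filter.1 hs).1).2, ← hy]
    exact (rank_updateCol_mulVec_le M i y).trans_lt (Nat.lt_succ_of_le hr)
  have hcoeff := congrArg (coeff · r) hdet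
  simp only [coeff_add, hvanish, add_zero, coeff_det_one_add_X_smul_updateCol,
    Function.comp_apply, coeff_C_mul, N, coeff_det_one_add_X_smul_eq_sum_minors] at hcoeff
  rw [mul_comm, hcoeff]

theorem ker_toLin'_sq_eq_of_rank_mul_self (M : Matrix ι ι K) (h : (M * M).rank = M.rank) :
    LinearMap.ker (toLin' M ^ 2) = LinearMap.ker (toLin' M) := by
  rw [sq, Module.End.mul_eq_comp, ← toLin'_mul]
  refine (Submodule.eq_of_le_of_finrank_eq ?_ ?_).symm
  · rw [toLin'_mul]
    exact LinearMap.ker_le_ker_comp _ _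
  have h1 := LinearMap.finrank_range_add_finrank_ker (toLin' (M * M))
  have h2 := LinearMap.finrank_range_add_finrank_ker (toLin' M)
  rw [rank, ← toLin'_apply', rank, ← toLin'_apply'] at h
  omega

theorem sum_minors_rank_ne_zero (M : Matrix ι ι K) (h : (M * M).rank = M.rank) :
    ∑ s ∈ powersetCard M.rank (univ : Finset ι),
      (M.submatrix (↑) (↑) : Matrix s s K).det ≠ 0 := by
  have htrail : M.charpoly.natTrailingDegree = Fintype.card ι - M.rank := by
    have hmult := LinearMap.finrank_maxGenEigenspace_eq (toLin' M) 0
    rw [Module.End.maxGenEigenspace_zero_eq_ker_of_ker_sq _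
        (ker_toLin'_sq_eq_of_rank_mul_self M h), charpoly_toLin',
      rootMultiplicity_eq_natTrailingDegree, map_zero, add_zero, comp_X] at hmult
    have hnull := LinearMap.finrank_range_add_finrank_ker (toLin' M)
    rw [Module.finrank_fintype_fun_eq_card] at hnull
    rw [rank, ← toLin'_apply']
    omega
  intro h0
  have hc := M.charpoly_coeff_eq_sum_minors M.rank M.rank_le_card_width
  rw [h0, mul_zero, ← htrail] at hc
  exact trailingCoeff_nonzero_iff_nonzero.mpr M.charpoly_monic.ne_zero hc

theorem apply_eq_sum_minors_updateCol_div {κ : Type*} (M : Matrix ι ι K)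
    (hM : (M * M).rank = M.rank) {Z : Matrix ι κ K} (hZ : ∃ Y : Matrix ι κ K, M * Y = Z)
    (i : ι) (j : κ) :
    Z i j =
      (∑ s ∈ (powersetCard M.rank (univ : Finset ι)).filter (i ∈ ·),
        ((M.updateCol i fun l => (M * Z) l j).submatrix (↑) (↑) : Matrix s s K).det) /
      ∑ s ∈ powersetCard M.rank (univ : Finset ι),
        (M.submatrix (↑) (↑) : Matrix s s K).det := by
  obtain ⟨Y, rfl⟩ := hZ
  refine eq_div_of_mul_eq (sum_minors_rank_ne_zero M hM) ?_
  rw [mul_comm]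
  exact sum_minors_mul_apply M le_rfl ⟨fun l => Y l j, rfl⟩ i

theorem apply_eq_sum_minors_updateRow_div {κ : Type*} (M : Matrix ι ι K)
    (hM : (M * M).rank = M.rank) {Z : Matrix κ ι K} (hZ : ∃ Y : Matrix κ ι K, Y * M = Z)
    (i : κ) (j : ι) :
    Z i j =
      (∑ s ∈ (powersetCard M.rank (univ : Finset ι)).filter (j ∈ ·),
        ((M.updateRow j ((Z * M) i)).submatrix (↑) (↑) : Matrix s s K).det) /
      ∑ s ∈ powersetCard M.rank (univ : Finset ι),
        (M.submatrix (↑) (↑) : Matrix s s K).det := by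
  obtain ⟨Y, rfl⟩ := hZ
  have hMt : (Mᵀ * Mᵀ).rank = Mᵀ.rank := by
    rw [← transpose_mul, rank_transpose, rank_transpose, hM]
  have hcol := apply_eq_sum_minors_updateCol_div Mᵀ hMt ⟨Yᵀ, (transpose_mul Y M).symm⟩ j i
  simp only [rank_transpose, ← transpose_mul, transpose_apply, updateCol_transpose,
    ← transpose_submatrix, det_transpose] at hcol
  exact hcol

end Field

section WeightedDrazin

variable {m n : Type*} [Fintype m] [Fintype n] [DecidableEq m]

theorem pow_mul_eq_mul_pow_of_mul_eq [DecidableEq n] {α : Type*} [Semiring α]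
    {U : Matrix m m α} {V : Matrix n n α} {P : Matrix m n α} (h : U * P = P * V) (s : ℕ) :
    U ^ s * P = P * V ^ s := by
  induction s with
  | zero => simp
  | succ s ih => rw [pow_succ', Matrix.mul_assoc, ih, ← Matrix.mul_assoc, h, Matrix.mul_assoc,
      ← pow_succ']

theorem rank_pow_add_eq_of_pow_succ_mul_eq {K : Type*} [Field K] {B D : Matrix m m K} {k : ℕ}
    (h : B ^ (k + 1) * D = B ^ k) (j : ℕ) : (B ^ (k + j)).rank = (B ^ k).rank := by
  have hfac : ∀ j, B ^ (k + j) * D ^ j = B ^ k := by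
    intro j
    induction j with
    | zero => simp
    | succ j ih =>
      rw [show k + (j + 1) = j + (k + 1) by omega, pow_add, pow_succ' D, Matrix.mul_assoc,
        ← Matrix.mul_assoc _ D, h, ← Matrix.mul_assoc, ← pow_add, add_comm j k, ih]
  refine le_antisymm ?_ ?_
  · rw [add_comm, pow_add]
    exact rank_mul_le_right _ _
  · conv_lhs => rw [← hfac j]
    exact rank_mul_le_left _ _

theorem rank_pow_succ_mul_comm_le [DecidableEq n] {K : Type*} [Field K] (A : Matrix m n K)
    (W : Matrix n m K) (s : ℕ) : ((W * A) ^ (s + 1)).rank ≤ ((A * W) ^ s).rank := by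
  have hfac : (W * A) ^ (s + 1) = W * (A * W) ^ s * A := by
    rw [pow_succ, ← Matrix.mul_assoc, pow_mul_eq_mul_pow_of_mul_eq (Matrix.mul_assoc W A W)]
  rw [hfac]
  exact (rank_mul_le_left _ _).trans (rank_mul_le_right _ _)

/-- The equations defining the `W`-weighted Drazin inverse `X` of `A`, with an arbitrary exponent
`k` in place of the index. -/
structure IsWeightedDrazinInverse {α : Type*} [Semiring α] (A : Matrix m n α)
    (W : Matrix n m α) (k : ℕ) (X : Matrix m n α) : Prop where
  pow_succ_mul_mul : (A * W) ^ (k + 1) * X * W = (A * W) ^ k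
  mul_mul_mul_mul_mul : X * W * A * W * X = X
  mul_mul_comm : A * W * X = X * W * A

namespace IsWeightedDrazinInverse

variable {α : Type*} [Semiring α] {A : Matrix m n α} {W : Matrix n m α} {k : ℕ}
  {X : Matrix m n α}

theorem commute_mul_mul_right (hX : IsWeightedDrazinInverse A W k X) :
    Commute (A * W) (X * W) := by
  simp only [Commute, SemiconjBy, ← Matrix.mul_assoc, hX.mul_mul_comm]

theorem commute_mul_mul_left (hX : IsWeightedDrazinInverse A W k X) :
    Commute (W * A) (W * X) := by
  have h := hX.mul_mul_comm
  simp only [Matrix.mul_assoc] at h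
  simp only [Commute, SemiconjBy, Matrix.mul_assoc, h]

theorem eq_pow_mul (hX : IsWeightedDrazinInverse A W k X) (s : ℕ) :
    X = (A * W) ^ s * ((X * W) ^ s * X) := by
  have hP : A * W * (X * W) * X = X := by
    rw [← Matrix.mul_assoc, hX.mul_mul_comm, hX.mul_mul_mul_mul_mul]
  rw [← Matrix.mul_assoc, ← hX.commute_mul_mul_right.mul_pow]
  induction s with
  | zero => simp
  | succ s ih => rwa [pow_succ, Matrix.mul_assoc, hP]

theorem eq_mul_pow [DecidableEq n] (hX : IsWeightedDrazinInverse A W k X) (s : ℕ) :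
    X = X * (W * X) ^ s * (W * A) ^ s := by
  have hP : X * (W * X * (W * A)) = X := by
    rw [← hX.commute_mul_mul_left.eq]
    simpa only [Matrix.mul_assoc] using hX.mul_mul_mul_mul_mul
  rw [Matrix.mul_assoc, ← (hX.commute_mul_mul_left.symm).mul_pow]
  induction s with
  | zero => simp
  | succ s ih => rwa [pow_succ', ← Matrix.mul_assoc, hP]

theorem pow_add_two_mul (hX : IsWeightedDrazinInverse A W k X) :
    (A * W) ^ (k + 2) * X = (A * W) ^ k * A := by
  rw [pow_succ, Matrix.mul_assoc, hX.mul_mul_comm, ← Matrix.mul_assoc, ← Matrix.mul_assoc,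
    hX.pow_succ_mul_mul]

theorem mul_pow_add_two [DecidableEq n] (hX : IsWeightedDrazinInverse A W k X) :
    X * (W * A) ^ (k + 2) = A * (W * A) ^ k := by
  have hBX : A * W * X = X * (W * A) := by rw [hX.mul_mul_comm, Matrix.mul_assoc]
  rw [← pow_mul_eq_mul_pow_of_mul_eq hBX, hX.pow_add_two_mul,
    pow_mul_eq_mul_pow_of_mul_eq (Matrix.mul_assoc A W A)]

end IsWeightedDrazinInverse

theorem IsWeightedDrazinInverse.rank_pow_add {K : Type*} [Field K] {A : Matrix m n K}
    {W : Matrix n m K} {k : ℕ} {X : Matrix m n K} (hX : IsWeightedDrazinInverse A W k X)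
    (j : ℕ) : ((A * W) ^ (k + j)).rank = ((A * W) ^ k).rank :=
  rank_pow_add_eq_of_pow_succ_mul_eq (D := X * W)
    (by rw [← Matrix.mul_assoc, hX.pow_succ_mul_mul]) j

theorem IsWeightedDrazinInverse.rank_mul_comm_pow_add_succ [DecidableEq n] {K : Type*} [Field K]
    {A : Matrix m n K} {W : Matrix n m K} {k : ℕ} {X : Matrix m n K}
    (hX : IsWeightedDrazinInverse A W k X) (j : ℕ) :
    ((W * A) ^ (k + j + 1)).rank = ((A * W) ^ k).rank := by
  refine le_antisymm ((rank_pow_succ_mul_comm_le A W _).trans_eq (hX.rank_pow_add j)) ?_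
  rw [← hX.rank_pow_add (j + 2)]
  exact rank_pow_succ_mul_comm_le W A _

end WeightedDrazin

end Matrix

theorem weightedDrazinInverse_entry_det_repr_general
    (m n k r : ℕ) (A : Matrix (Fin m) (Fin n) ℂ) (W : Matrix (Fin n) (Fin m) ℂ)
    (hr : (((A * W) ^ k)).rank = r)
    (X : Matrix (Fin m) (Fin n) ℂ)
    (h1 : (A * W) ^ (k + 1) * X * W = (A * W) ^ k)
    (h2 : X * W * A * W * X = X)
    (h3 : A * W * X = X * W * A)
    (i : Fin m) (j : Fin n) :
    X i j =
      (∑ β ∈ (Finset.powersetCard r (Finset.univ : Finset (Fin m))).filter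
          (fun β => i ∈ β),
        (((A * W) ^ (k + 2)).updateCol i (fun l => ((A * W) ^ k * A) l j)).pminor β) /
      (∑ β ∈ Finset.powersetCard r (Finset.univ : Finset (Fin m)),
        ((A * W) ^ (k + 2)).pminor β) ∧
    X i j =
      (∑ α ∈ (Finset.powersetCard r (Finset.univ : Finset (Fin n))).filter
          (fun α => j ∈ α),
        (((W * A) ^ (k + 2)).updateRow j (fun l => (A * (W * A) ^ k) i l)).pminor α) /
      (∑ α ∈ Finset.powersetCard r (Finset.univ : Finset (Fin n)),
        ((W * A) ^ (k + 2)).pminor α) := by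
  have hX : IsWeightedDrazinInverse A W k X := ⟨h1, h2, h3⟩
  have hM : ((A * W) ^ (k + 2)).rank = r := hr ▸ hX.rank_pow_add 2
  have hN : ((W * A) ^ (k + 2)).rank = r := hr ▸ hX.rank_mul_comm_pow_add_succ 1
  have hMM : ((A * W) ^ (k + 2) * (A * W) ^ (k + 2)).rank = ((A * W) ^ (k + 2)).rank := by
    rw [← pow_add, show k + 2 + (k + 2) = k + (k + 4) by omega, hX.rank_pow_add, hM, hr]
  have hNN : ((W * A) ^ (k + 2) * (W * A) ^ (k + 2)).rank = ((W * A) ^ (k + 2)).rank := by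
    rw [← pow_add, show k + 2 + (k + 2) = k + (k + 3) + 1 by omega,
      hX.rank_mul_comm_pow_add_succ, hN, hr]
  constructor
  · have h := apply_eq_sum_minors_updateCol_div _ hMM ⟨_, (hX.eq_pow_mul (k + 2)).symm⟩ i j
    rwa [hX.pow_add_two_mul, hM] at h
  · have h := apply_eq_sum_minors_updateRow_div _ hNN ⟨_, (hX.eq_mul_pow (k + 2)).symm⟩ i j
    rwa [hX.mul_pow_add_two, hN] at h

/-- Determinantal representations of the W-weighted Drazin inverse
`X = A_{d,W}` (characterized by `(AW)^{k+1} X W = (AW)^k`, `XWAWX = X`, `AWX = XWA`) of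
`A ∈ ℂ^{m×n}` with respect to `W ∈ ℂ^{n×m}`, where `k = max (Ind (AW)) (Ind (WA))` and
`rank ((AW)^k) = r`, via `V̄^k = (AW)^k A` and `Ū^k = A (WA)^k`. -/
theorem weightedDrazinInverse_entry_det_repr
    (m n k₁ k₂ k r : ℕ) (A : Matrix (Fin m) (Fin n) ℂ) (W : Matrix (Fin n) (Fin m) ℂ)
    (hk₁ : IsLeast {j : ℕ | ((A * W) ^ (j + 1)).rank = ((A * W) ^ j).rank} k₁)
    (hk₂ : IsLeast {j : ℕ | ((W * A) ^ (j + 1)).rank = ((W * A) ^ j).rank} k₂)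
    (hk : k = max k₁ k₂)
    (hr : (((A * W) ^ k)).rank = r)
    (X : Matrix (Fin m) (Fin n) ℂ)
    (h1 : (A * W) ^ (k + 1) * X * W = (A * W) ^ k)
    (h2 : X * W * A * W * X = X)
    (h3 : A * W * X = X * W * A)
    (i : Fin m) (j : Fin n) :
    X i j =
      (∑ β ∈ (Finset.powersetCard r (Finset.univ : Finset (Fin m))).filter
          (fun β => i ∈ β),
        (((A * W) ^ (k + 2)).updateCol i (fun l => ((A * W) ^ k * A) l j)).pminor β) /
      (∑ β ∈ Finset.powersetCard r (Finset.univ : Finset (Fin m)),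
        ((A * W) ^ (k + 2)).pminor β) ∧
    X i j =
      (∑ α ∈ (Finset.powersetCard r (Finset.univ : Finset (Fin n))).filter
          (fun α => j ∈ α),
        (((W * A) ^ (k + 2)).updateRow j (fun l => (A * (W * A) ^ k) i l)).pminor α) /
      (∑ α ∈ Finset.powersetCard r (Finset.univ : Finset (Fin n)),
        ((W * A) ^ (k + 2)).pminor α) :=
  weightedDrazinInverse_entry_det_repr_general m n k r A W hr X h1 h2 h3 i j
end
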